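/- arXiv:1709.05907 — 7 statements merged into one kernel-verified Lean document; each statement's English description precedes it below -/
import Mathlib

section
/- Let Z be a stationary process on a finite alphabet 𝒵 and let Z' be a first-order Markov chain on 𝒵 with transition matrix P' and initial distribution equal to the marginal of Z_1, such that P'_{z→z'} > 0 whenever P(Z_1 = z, Z_2 = z') > 0. Then the Kullback–Leibler divergence rate D̄(Z‖Z') := lim_{n→∞} (1/n) Σ_{z_1^n} p_{Z_1^n}(z_1^n) log( p_{Z_1^n}(z_1^n) / p_{Z'_1^n}(z_1^n) ) exists and satisfies D̄(Z‖Z') ≥ H(Z_2|Z_1) − H̄(Z); moreover, the minimum over all such transition matrices P' is attained at P_{z→z'} = P(Z_2 = z' | Z_1 = z), and for this choice D̄(Z‖Z') = H(Z_2|Z_1) − H̄(Z). -/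
open Filter Real

/-- Shannon entropy (base 2) of a finitely supported probability mass function. -/
noncomputable def ent {A : Type} [Fintype A] (q : A → ℝ) : ℝ :=
  - ∑ a, q a * Real.logb 2 (q a)

/-- Joint law of the first `n+1` samples of a Markov chain with initial distribution `μ`
and transition matrix `P`. -/
noncomputable def chainJoint {X : Type} (μ : X → ℝ) (P : X → X → ℝ) (n : ℕ)
    (x : Fin (n + 1) → X) : ℝ :=
  μ (x 0) * ∏ i : Fin n, P (x i.castSucc) (x i.succ)

/-- A stationary stochastic process on a finite alphabet `Z`, described by the consistent,
shift-invariant family of joint probability mass functions of `(Z_1, …, Z_{n+1})`. -/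
structure StationaryProcess (Z : Type) [Fintype Z] where
  p : (n : ℕ) → (Fin (n + 1) → Z) → ℝ
  nonneg : ∀ n z, 0 ≤ p n z
  sum_one : ∀ n, ∑ z, p n z = 1
  consistent : ∀ n (z : Fin (n + 1) → Z), p n z = ∑ z', p (n + 1) (Fin.snoc z z')
  shift : ∀ n (z : Fin (n + 1) → Z), p n z = ∑ z0, p (n + 1) (Fin.cons z0 z)

/-- A stationary process is a first-order Markov chain: for all `n > 1` and all trajectories,
`P(Z_n = z_n | Z_1^{n-1} = z_1^{n-1}) = P(Z_n = z_n | Z_{n-1} = z_{n-1})`, expressed in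
cross-multiplied form. -/
def IsMarkov {Z : Type} [Fintype Z] (S : StationaryProcess Z) : Prop :=
  ∀ n (z : Fin (n + 2) → Z),
    S.p (n + 1) z * S.p 0 (fun _ => z ⟨n, by omega⟩) =
      S.p n (fun i => z i.castSucc) *
        S.p 1 (fun i : Fin 2 => z ⟨n + i.val, by have := i.isLt; omega⟩)

/-!
Write `p_n` for the law of `Z_1^{n+1}` and `p'_n` for that of the chain with transition matrix
`Q`. Where `p_n > 0` every factor of `p'_n` is positive, so the log-ratio splits, and by
stationarity each of the `n` transition terms averages to the same conditional cross-entropy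
`H_Q(Z_2|Z_1) = -E log₂ Q(Z_1, Z_2)`:
`∑ p_n log₂ (p_n / p'_n) = H(Z_1) - H(Z_1^{n+1}) + n H_Q(Z_2|Z_1)`.
By Cesàro, `H(Z_1^{n+1}) / n → H̄`, so the divergence rate is `H_Q(Z_2|Z_1) - H̄`. Gibbs'
inequality against the sub-probability `Q(a,b) P(Z_1 = a)` gives
`H_Q(Z_2|Z_1) ≥ H(Z_1,Z_2) - H(Z_1)`, with equality for the true conditional law.
-/

open Finset

theorem mul_log_le_mul_log_add_sub {p q : ℝ} (hp : 0 ≤ p) (hq : 0 ≤ q) (hpq : 0 < p → 0 < q) :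
    p * log q ≤ p * log p + (q - p) := by
  rcases hp.eq_or_lt with rfl | hp
  · simpa using hq
  have hq := hpq hp
  have h := mul_le_mul_of_nonneg_left (log_le_sub_one_of_pos (div_pos hq hp)) hp.le
  rw [log_div hq.ne' hp.ne', mul_sub, mul_sub, mul_div_cancel₀ _ hp.ne'] at h
  linarith

theorem sum_mul_logb_le_sum_mul_logb {ι : Type*} [Fintype ι] {p q : ι → ℝ}
    (hp : ∀ i, 0 ≤ p i) (hq : ∀ i, 0 ≤ q i) (hpq : ∀ i, 0 < p i → 0 < q i)
    (hsum : ∑ i, q i ≤ ∑ i, p i) :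
    ∑ i, p i * logb 2 (q i) ≤ ∑ i, p i * logb 2 (p i) := by
  simp only [logb, mul_div_assoc', ← sum_div]
  refine div_le_div_of_nonneg_right ?_ (log_nonneg one_le_two)
  calc ∑ i, p i * log (q i) ≤ ∑ i, (p i * log (p i) + (q i - p i)) :=
        sum_le_sum fun i _ => mul_log_le_mul_log_add_sub (hp i) (hq i) (hpq i)
    _ ≤ ∑ i, p i * log (p i) := by
        rw [sum_add_distrib, sum_sub_distrib]
        linarith

theorem pos_of_sum_mul_comp_eq {ι κ : Type*} [Fintype ι] [Fintype κ] [DecidableEq κ]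
    {p : ι → ℝ} {q : κ → ℝ} {φ : ι → κ} (hp : ∀ i, 0 ≤ p i)
    (h : ∀ f : κ → ℝ, ∑ i, p i * f (φ i) = ∑ k, q k * f k) {i : ι} (hi : 0 < p i) :
    0 < q (φ i) := by
  have hf := h fun k => if k = φ i then 1 else 0
  simp only [mul_ite, mul_one, mul_zero, sum_ite_eq', mem_univ, if_true] at hf
  rw [← hf]
  calc 0 < p i := hi
    _ = if φ i = φ i then p i else 0 := (if_pos rfl).symm
    _ ≤ ∑ j, if φ j = φ i then p j else 0 :=
        single_le_sum (f := fun j => if φ j = φ i then p j else 0)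
          (fun j _ => by split_ifs <;> simp [hp j]) (mem_univ i)

theorem sum_pi_fin_two {α M : Type*} [Fintype α] [AddCommMonoid M] (f : (Fin 2 → α) → M) :
    ∑ w, f w = ∑ a, ∑ b, f ![a, b] := by
  rw [← (piFinTwoEquiv fun _ => α).symm.sum_comp, Fintype.sum_prod_type]
  rfl

theorem chainJoint_pos {X : Type} {μ : X → ℝ} {P : X → X → ℝ} {n : ℕ} {x : Fin (n + 1) → X}
    (hμ : 0 < μ (x 0)) (hP : ∀ i : Fin n, 0 < P (x i.castSucc) (x i.succ)) :
    0 < chainJoint μ P n x :=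
  mul_pos hμ (prod_pos fun i _ => hP i)

theorem logb_chainJoint {X : Type} {μ : X → ℝ} {P : X → X → ℝ} {n : ℕ} {x : Fin (n + 1) → X}
    (hμ : 0 < μ (x 0)) (hP : ∀ i : Fin n, 0 < P (x i.castSucc) (x i.succ)) :
    logb 2 (chainJoint μ P n x) =
      logb 2 (μ (x 0)) + ∑ i : Fin n, logb 2 (P (x i.castSucc) (x i.succ)) := by
  rw [chainJoint, logb_mul hμ.ne' (prod_pos fun i _ => hP i).ne',
    logb_prod _ _ fun i _ => (hP i).ne']

namespace StationaryProcess

variable {Z : Type} [Fintype Z] (S : StationaryProcess Z)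

theorem sum_p_mul_init (n : ℕ) (f : (Fin (n + 1) → Z) → ℝ) :
    ∑ z : Fin (n + 2) → Z, S.p (n + 1) z * f (Fin.init z) = ∑ z, S.p n z * f z := by
  rw [← (Fin.snocEquiv fun _ => Z).sum_comp, Fintype.sum_prod_type_right]
  refine sum_congr rfl fun z _ => ?_
  change ∑ a, S.p (n + 1) (Fin.snoc z a) * f (Fin.init (Fin.snoc z a : Fin (n + 2) → Z)) = _
  simp only [Fin.init_snoc, ← sum_mul, ← S.consistent]

theorem sum_p_mul_tail (n : ℕ) (f : (Fin (n + 1) → Z) → ℝ) :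
    ∑ z : Fin (n + 2) → Z, S.p (n + 1) z * f (Fin.tail z) = ∑ z, S.p n z * f z := by
  rw [← (Fin.consEquiv fun _ => Z).sum_comp, Fintype.sum_prod_type_right]
  refine sum_congr rfl fun z _ => ?_
  change ∑ a, S.p (n + 1) (Fin.cons a z) * f (Fin.tail (Fin.cons a z : Fin (n + 2) → Z)) = _
  simp only [Fin.tail_cons, ← sum_mul, ← S.shift]

theorem sum_p_mul_zero (n : ℕ) (f : (Fin 1 → Z) → ℝ) :
    ∑ z : Fin (n + 1) → Z, S.p n z * f (fun _ => z 0) = ∑ y, S.p 0 y * f y := by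
  induction n with
  | zero =>
    refine sum_congr rfl fun z _ => ?_
    congr 2 with i
    rw [Fin.fin_one_eq_zero i]
  | succ n ih => rw [← ih, ← S.sum_p_mul_init n]; rfl

theorem sum_p_mul_adjacent (n : ℕ) (i : Fin n) (f : (Fin 2 → Z) → ℝ) :
    ∑ z : Fin (n + 1) → Z, S.p n z * f ![z i.castSucc, z i.succ] = ∑ w, S.p 1 w * f w := by
  induction n with
  | zero => exact i.elim0
  | succ n ih =>
    induction i using Fin.lastCases with
    | last =>
      cases n with
      | zero =>
        refine sum_congr rfl fun w _ => ?_
        congr 2 with i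
        fin_cases i <;> rfl
      | succ n =>
        rw [← ih (Fin.last n), ← S.sum_p_mul_tail (n + 1)]
        rfl
    | cast j =>
      rw [← ih j, ← S.sum_p_mul_init n, Fin.succ_castSucc]
      rfl

theorem p_zero_pos {n : ℕ} {z : Fin (n + 1) → Z} (hz : 0 < S.p n z) :
    0 < S.p 0 (fun _ => z 0) := by
  classical
  exact pos_of_sum_mul_comp_eq (S.nonneg n) (S.sum_p_mul_zero n) hz

theorem p_one_pos {n : ℕ} (i : Fin n) {z : Fin (n + 1) → Z} (hz : 0 < S.p n z) :
    0 < S.p 1 ![z i.castSucc, z i.succ] := by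
  classical
  exact pos_of_sum_mul_comp_eq (S.nonneg n) (S.sum_p_mul_adjacent n i) hz

noncomputable def transitionCrossEntropy (Q : Z → Z → ℝ) : ℝ :=
  -∑ w : Fin 2 → Z, S.p 1 w * logb 2 (Q (w 0) (w 1))

theorem sum_p_mul_logb_div_chainJoint (Q : Z → Z → ℝ)
    (hQ : ∀ a b, 0 < S.p 1 ![a, b] → 0 < Q a b) (n : ℕ) :
    ∑ z, S.p n z * logb 2 (S.p n z / chainJoint (fun a => S.p 0 fun _ => a) Q n z)
      = ent (S.p 0) - ent (S.p n) + n * S.transitionCrossEntropy Q := by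
  have expand : ∀ z : Fin (n + 1) → Z,
      S.p n z * logb 2 (S.p n z / chainJoint (fun a => S.p 0 fun _ => a) Q n z)
        = S.p n z * logb 2 (S.p n z) - S.p n z * logb 2 (S.p 0 fun _ => z 0)
          - ∑ i : Fin n, S.p n z * logb 2 (Q (z i.castSucc) (z i.succ)) := by
    intro z
    rcases (S.nonneg n z).eq_or_lt with hz | hz
    · simp [← hz]
    have hμ := S.p_zero_pos hz
    have hQz : ∀ i : Fin n, 0 < Q (z i.castSucc) (z i.succ) := fun i => hQ _ _ (S.p_one_pos i hz)
    rw [logb_div hz.ne' (chainJoint_pos hμ hQz).ne', logb_chainJoint hμ hQz, ← mul_sum]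
    ring
  have transitions : ∀ i : Fin n,
      ∑ z : Fin (n + 1) → Z, S.p n z * logb 2 (Q (z i.castSucc) (z i.succ))
        = -S.transitionCrossEntropy Q := fun i => by
    rw [transitionCrossEntropy, neg_neg, ← S.sum_p_mul_adjacent n i]
    rfl
  rw [sum_congr rfl fun z _ => expand z, sum_sub_distrib, sum_sub_distrib, sum_comm,
    sum_congr rfl fun i _ => transitions i, S.sum_p_mul_zero n fun y => logb 2 (S.p 0 y)]
  simp only [ent, sum_const, card_univ, Fintype.card_fin, nsmul_eq_mul]
  ring

theorem tendsto_klDivergenceRate (hbar : ℝ)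
    (hlim : Tendsto (fun n => ent (S.p (n + 1)) - ent (S.p n)) atTop (nhds hbar))
    (Q : Z → Z → ℝ) (hQ : ∀ a b, 0 < S.p 1 ![a, b] → 0 < Q a b) :
    Tendsto (fun n : ℕ => (1 / ((n : ℝ) + 1)) * ∑ z : Fin (n + 1) → Z,
        S.p n z * logb 2 (S.p n z / chainJoint (fun a => S.p 0 fun _ => a) Q n z))
      atTop (nhds (S.transitionCrossEntropy Q - hbar)) := by
  have entropy_rate : Tendsto (fun n : ℕ => (n : ℝ)⁻¹ * (ent (S.p n) - ent (S.p 0)))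
      atTop (nhds hbar) := by
    simpa only [sum_range_sub (fun k => ent (S.p k))] using hlim.cesaro
  have scaled := (tendsto_natCast_div_add_atTop (1 : ℝ)).mul
    (tendsto_const_nhds (x := S.transitionCrossEntropy Q) |>.sub entropy_rate)
  rw [one_mul] at scaled
  refine scaled.congr' ((eventually_ne_atTop 0).mono fun n hn => ?_)
  dsimp only
  rw [S.sum_p_mul_logb_div_chainJoint Q hQ n]
  field_simp
  ring

theorem ent_one_sub_ent_zero_le_transitionCrossEntropy (Q : Z → Z → ℝ)
    (hQ0 : ∀ a b, 0 ≤ Q a b) (hQ1 : ∀ a, ∑ b, Q a b = 1)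
    (hQ : ∀ a b, 0 < S.p 1 ![a, b] → 0 < Q a b) :
    ent (S.p 1) - ent (S.p 0) ≤ S.transitionCrossEntropy Q := by
  set q : (Fin 2 → Z) → ℝ := fun w => Q (w 0) (w 1) * S.p 0 (fun _ => w 0)
  have hQw : ∀ w : Fin 2 → Z, 0 < S.p 1 w → 0 < Q (w 0) (w 1) := fun w hw =>
    hQ _ _ (by rwa [show ![w 0, w 1] = w from FinVec.etaExpand_eq w])
  have hq_sum : ∑ w, q w = ∑ w, S.p 1 w := by
    rw [S.sum_one, sum_pi_fin_two, ← S.sum_one 0,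
      ← (Equiv.funUnique (Fin 1) Z).symm.sum_comp]
    refine sum_congr rfl fun a _ => ?_
    simp only [q, ← sum_mul, Matrix.cons_val_zero, Matrix.cons_val_one, hQ1, one_mul]
    rfl
  have gibbs := sum_mul_logb_le_sum_mul_logb (S.nonneg 1)
    (fun w => mul_nonneg (hQ0 _ _) (S.nonneg 0 _))
    (fun w hw => mul_pos (hQw w hw) (S.p_zero_pos hw)) hq_sum.le
  have split : ∀ w, S.p 1 w * logb 2 (q w)
      = S.p 1 w * logb 2 (Q (w 0) (w 1)) + S.p 1 w * logb 2 (S.p 0 fun _ => w 0) := by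
    intro w
    rcases (S.nonneg 1 w).eq_or_lt with hw | hw
    · simp [← hw]
    rw [logb_mul (hQw w hw).ne' (S.p_zero_pos hw).ne', mul_add]
  rw [sum_congr rfl fun w _ => split w, sum_add_distrib,
    S.sum_p_mul_zero 1 fun y => logb 2 (S.p 0 y)] at gibbs
  simp only [ent, transitionCrossEntropy] at gibbs ⊢
  linarith

open scoped Classical in
noncomputable def condTransition (a b : Z) : ℝ :=
  if S.p 0 (fun _ => a) = 0 then (Fintype.card Z : ℝ)⁻¹
  else S.p 1 ![a, b] / S.p 0 (fun _ => a)

theorem condTransition_pos {a b : Z} (hab : 0 < S.p 1 ![a, b]) : 0 < S.condTransition a b := by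
  have ha : 0 < S.p 0 (fun _ => a) := S.p_zero_pos hab
  rw [condTransition, if_neg ha.ne']
  exact div_pos hab ha

theorem transitionCrossEntropy_condTransition :
    S.transitionCrossEntropy S.condTransition = ent (S.p 1) - ent (S.p 0) := by
  have split : ∀ w : Fin 2 → Z, S.p 1 w * logb 2 (S.condTransition (w 0) (w 1))
      = S.p 1 w * logb 2 (S.p 1 w) - S.p 1 w * logb 2 (S.p 0 fun _ => w 0) := by
    intro w
    rcases (S.nonneg 1 w).eq_or_lt with hw | hw
    · simp [← hw]
    have h0 := S.p_zero_pos hw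
    rw [condTransition, if_neg h0.ne', show ![w 0, w 1] = w from FinVec.etaExpand_eq w,
      logb_div hw.ne' h0.ne', mul_sub]
  rw [transitionCrossEntropy, sum_congr rfl fun w _ => split w, sum_sub_distrib,
    S.sum_p_mul_zero 1 fun y => logb 2 (S.p 0 y), ent, ent]
  ring

end StationaryProcess

open scoped Classical in
theorem kldr_to_markov_exists_ge_and_min_attained_general {Z : Type} [Fintype Z]
    (S : StationaryProcess Z) (hbar : ℝ)
    (hlim : Filter.Tendsto (fun n => ent (S.p (n + 1)) - ent (S.p n))
      Filter.atTop (nhds hbar)) :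
    (∀ Q : Z → Z → ℝ, (∀ z z', 0 ≤ Q z z') → (∀ z, ∑ z', Q z z' = 1) →
      (∀ z z', 0 < S.p 1 ![z, z'] → 0 < Q z z') →
      ∃ D : ℝ,
        Filter.Tendsto (fun n : ℕ => (1 / ((n : ℝ) + 1)) * ∑ z : Fin (n + 1) → Z,
            S.p n z * Real.logb 2 (S.p n z /
              chainJoint (fun a => S.p 0 (fun _ => a)) Q n z))
          Filter.atTop (nhds D) ∧
        (ent (S.p 1) - ent (S.p 0)) - hbar ≤ D) ∧
    Filter.Tendsto (fun n : ℕ => (1 / ((n : ℝ) + 1)) * ∑ z : Fin (n + 1) → Z,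
        S.p n z * Real.logb 2 (S.p n z /
          chainJoint (fun a => S.p 0 (fun _ => a))
            (fun a b => if S.p 0 (fun _ => a) = 0 then (Fintype.card Z : ℝ)⁻¹
              else S.p 1 ![a, b] / S.p 0 (fun _ => a)) n z))
      Filter.atTop (nhds ((ent (S.p 1) - ent (S.p 0)) - hbar)) := by
  refine ⟨fun Q hQ0 hQ1 hQ => ⟨_, S.tendsto_klDivergenceRate hbar hlim Q hQ, ?_⟩, ?_⟩
  · linarith [S.ent_one_sub_ent_zero_le_transitionCrossEntropy Q hQ0 hQ1 hQ]
  · rw [← S.transitionCrossEntropy_condTransition]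
    exact S.tendsto_klDivergenceRate hbar hlim S.condTransition fun _ _ => S.condTransition_pos

open scoped Classical in
/-- Let `Z` be a stationary process on a finite alphabet and `Z'` a
first-order Markov chain on the same alphabet with transition matrix `Q` and initial
distribution equal to the marginal of `Z_1`, where `Q z z' > 0` whenever
`P(Z_1 = z, Z_2 = z') > 0`.  Then the Kullback–Leibler divergence rate
`D̄(Z‖Z') = lim_n (1/n) ∑ p(z_1^n) log₂ (p(z_1^n)/p'(z_1^n))` exists and satisfies
`D̄(Z‖Z') ≥ H(Z_2|Z_1) − H̄(Z)`; moreover the minimum over all such transition matrices is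
attained at `Q* z z' = P(Z_2 = z' | Z_1 = z)`, for which the divergence rate equals
`H(Z_2|Z_1) − H̄(Z)`. -/
theorem kldr_to_markov_exists_ge_and_min_attained {Z : Type} [Fintype Z] [Nonempty Z]
    (S : StationaryProcess Z) (hbar : ℝ)
    (hlim : Filter.Tendsto (fun n => ent (S.p (n + 1)) - ent (S.p n))
      Filter.atTop (nhds hbar)) :
    (∀ Q : Z → Z → ℝ, (∀ z z', 0 ≤ Q z z') → (∀ z, ∑ z', Q z z' = 1) →
      (∀ z z', 0 < S.p 1 ![z, z'] → 0 < Q z z') →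
      ∃ D : ℝ,
        Filter.Tendsto (fun n : ℕ => (1 / ((n : ℝ) + 1)) * ∑ z : Fin (n + 1) → Z,
            S.p n z * Real.logb 2 (S.p n z /
              chainJoint (fun a => S.p 0 (fun _ => a)) Q n z))
          Filter.atTop (nhds D) ∧
        (ent (S.p 1) - ent (S.p 0)) - hbar ≤ D) ∧
    Filter.Tendsto (fun n : ℕ => (1 / ((n : ℝ) + 1)) * ∑ z : Fin (n + 1) → Z,
        S.p n z * Real.logb 2 (S.p n z /
          chainJoint (fun a => S.p 0 (fun _ => a))
            (fun a b => if S.p 0 (fun _ => a) = 0 then (Fintype.card Z : ℝ)⁻¹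
              else S.p 1 ![a, b] / S.p 0 (fun _ => a)) n z))
      Filter.atTop (nhds ((ent (S.p 1) - ent (S.p 0)) - hbar)) :=
  kldr_to_markov_exists_ge_and_min_attained_general S hbar hlim
end

section
/- Let g : 𝒳 → 𝒴 be surjective and let Y_k = g(X_k). Define the row-stochastic matrix R := PW, i.e., R_{x→y} = Σ_{x' : g(x') = y} P_{x→x'}, and let Q be the transition matrix of the best Markov approximation of Y, Q_{y→y'} = P(Y_2 = y' | Y_1 = y). Then C_L(X,g) = Σ_{x∈𝒳} μ_x · D( R_{x→·} ‖ Q_{g(x)→·} ), where D(·‖·) denotes the Kullback–Leibler divergence between probability distributions on 𝒴. -/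
open Filter Real

/-- Joint law of `(Y_1, …, Y_{n+1})`, where `Y` is the stationary process obtained by
observing the stationary Markov chain `X ~ (μ, P)` through the channel `W`. -/
noncomputable def obsJoint {X Y : Type} [Fintype X] (μ : X → ℝ) (P : X → X → ℝ)
    (W : X → Y → ℝ) (n : ℕ) (y : Fin (n + 1) → Y) : ℝ :=
  ∑ x : Fin (n + 1) → X, chainJoint μ P n x * ∏ i, W (x i) (y i)

/-- A finite stochastic matrix is irreducible and aperiodic iff it is primitive, i.e., some
power (and hence all larger powers) of it is entrywise positive. -/
def IrreducibleAperiodic {X : Type} [Fintype X] [DecidableEq X] (P : Matrix X X ℝ) : Prop :=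
  ∃ N : ℕ, ∀ n ≥ N, ∀ x x' : X, 0 < (P ^ n) x x'

section Defs

variable {X Y : Type} [Fintype X] [Fintype Y]

/-- Marginal distribution `ν` of each `Y_k`: `νᵀ = μᵀ W`. -/
noncomputable def nuDist (μ : X → ℝ) (W : X → Y → ℝ) : Y → ℝ := fun y => ∑ x, μ x * W x y

/-- Joint distribution of `(Y_1, Y_2)`. -/
noncomputable def jointYY (μ : X → ℝ) (P : X → X → ℝ) (W : X → Y → ℝ) : Y × Y → ℝ :=
  fun p => ∑ x, ∑ x', μ x * W x p.1 * P x x' * W x' p.2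

/-- Joint distribution of `(X_1, Y_2)`. -/
noncomputable def jointX1Y2 (μ : X → ℝ) (P : X → X → ℝ) (W : X → Y → ℝ) : X × Y → ℝ :=
  fun p => ∑ x', μ p.1 * P p.1 x' * W x' p.2

/-- Joint distribution of `(X_2, Y_1)`. -/
noncomputable def jointX2Y1 (μ : X → ℝ) (P : X → X → ℝ) (W : X → Y → ℝ) : X × Y → ℝ :=
  fun p => ∑ x, μ x * W x p.2 * P x p.1

/-- Joint distribution of `(X_1, X_2)`. -/
noncomputable def jointXX (μ : X → ℝ) (P : X → X → ℝ) : X × X → ℝ :=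
  fun p => μ p.1 * P p.1 p.2

/-- Joint distribution of `(X_1, Y_1)`. -/
noncomputable def jointX1Y1 (μ : X → ℝ) (W : X → Y → ℝ) : X × Y → ℝ :=
  fun p => μ p.1 * W p.1 p.2

/-- Joint distribution of `(X_2, Y_2)`. -/
noncomputable def jointX2Y2 (μ : X → ℝ) (P : X → X → ℝ) (W : X → Y → ℝ) : X × Y → ℝ :=
  fun p => ∑ x, μ x * P x p.1 * W p.1 p.2

/-- Joint distribution of `(X_1, X_2, Y_2)`. -/
noncomputable def jointX1X2Y2 (μ : X → ℝ) (P : X → X → ℝ) (W : X → Y → ℝ) :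
    X × X × Y → ℝ :=
  fun p => μ p.1 * P p.1 p.2.1 * W p.2.1 p.2.2

/-- Joint distribution of `(X_1, X_2, Y_1)`. -/
noncomputable def jointX1X2Y1 (μ : X → ℝ) (P : X → X → ℝ) (W : X → Y → ℝ) :
    X × X × Y → ℝ :=
  fun p => μ p.1 * W p.1 p.2.2 * P p.1 p.2.1

/-- Joint distribution of `(X_1, Y_1, Y_2)`. -/
noncomputable def jointX1Y1Y2 (μ : X → ℝ) (P : X → X → ℝ) (W : X → Y → ℝ) :
    X × Y × Y → ℝ :=
  fun p => ∑ x', μ p.1 * W p.1 p.2.1 * P p.1 x' * W x' p.2.2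

/-- Conditional entropy `H(Y_2 | Y_1) = H(Y_1, Y_2) − H(Y_1)`. -/
noncomputable def HY2gY1 (μ : X → ℝ) (P : X → X → ℝ) (W : X → Y → ℝ) : ℝ :=
  ent (jointYY μ P W) - ent (nuDist μ W)

/-- Conditional entropy `H(Y_2 | X_1) = H(X_1, Y_2) − H(X_1)`. -/
noncomputable def HY2gX1 (μ : X → ℝ) (P : X → X → ℝ) (W : X → Y → ℝ) : ℝ :=
  ent (jointX1Y2 μ P W) - ent μ

/-- Conditional entropy `H(Y_1 | X_2) = H(X_2, Y_1) − H(X_2)`. -/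
noncomputable def HY1gX2 (μ : X → ℝ) (P : X → X → ℝ) (W : X → Y → ℝ) : ℝ :=
  ent (jointX2Y1 μ P W) - ent μ

/-- Mutual information `I(X_1; X_2) = H(X_1) + H(X_2) − H(X_1, X_2)` (stationary case). -/
noncomputable def IX1X2 (μ : X → ℝ) (P : X → X → ℝ) : ℝ :=
  2 * ent μ - ent (jointXX μ P)

/-- Mutual information `I(Y_1; Y_2) = H(Y_1) + H(Y_2) − H(Y_1, Y_2)` (stationary case). -/
noncomputable def IY1Y2 (μ : X → ℝ) (P : X → X → ℝ) (W : X → Y → ℝ) : ℝ :=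
  2 * ent (nuDist μ W) - ent (jointYY μ P W)

/-- The lumpability cost `C_L(X, W) = H(Y_2|Y_1) − H(Y_2|X_1)`. -/
noncomputable def CL (μ : X → ℝ) (P : X → X → ℝ) (W : X → Y → ℝ) : ℝ :=
  HY2gY1 μ P W - HY2gX1 μ P W

/-- The predictability cost `C_P(X, W) = I(X_1;X_2) − I(Y_1;Y_2)`. -/
noncomputable def CP (μ : X → ℝ) (P : X → X → ℝ) (W : X → Y → ℝ) : ℝ :=
  IX1X2 μ P - IY1Y2 μ P W

/-- The aggregation cost `C_β(X, W) = (1−2β)·C_L(X,W) + β·C_P(X,W)`. -/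
noncomputable def Cbeta (μ : X → ℝ) (P : X → X → ℝ) (W : X → Y → ℝ) (β : ℝ) : ℝ :=
  (1 - 2 * β) * CL μ P W + β * CP μ P W

/-- `δ_β(X,W) = (1−β)·(H(Y_2|Y_1) − H̄(Y)) + β·(I(X_1;X_2) − H(Y_1) + H̄(Y))`, where `hbarY`
denotes the entropy rate `H̄(Y)`. -/
noncomputable def deltaBeta (μ : X → ℝ) (P : X → X → ℝ) (W : X → Y → ℝ)
    (hbarY β : ℝ) : ℝ :=
  (1 - β) * (HY2gY1 μ P W - hbarY) + β * (IX1X2 μ P - ent (nuDist μ W) + hbarY)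

/-- Conditional mutual information
`I(X_1; X_2 | Y_2) = H(X_1,Y_2) + H(X_2,Y_2) − H(X_1,X_2,Y_2) − H(Y_2)`. -/
noncomputable def IX1X2gY2 (μ : X → ℝ) (P : X → X → ℝ) (W : X → Y → ℝ) : ℝ :=
  ent (jointX1Y2 μ P W) + ent (jointX2Y2 μ P W) - ent (jointX1X2Y2 μ P W) -
    ent (nuDist μ W)

/-- Conditional mutual information
`I(X_2; X_1 | Y_1) = H(X_1,Y_1) + H(X_2,Y_1) − H(X_1,X_2,Y_1) − H(Y_1)`. -/
noncomputable def IX2X1gY1 (μ : X → ℝ) (P : X → X → ℝ) (W : X → Y → ℝ) : ℝ :=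
  ent (jointX1Y1 μ W) + ent (jointX2Y1 μ P W) - ent (jointX1X2Y1 μ P W) -
    ent (nuDist μ W)

/-- Conditional mutual information
`I(Y_2; X_1 | Y_1) = H(X_1,Y_1) + H(Y_1,Y_2) − H(X_1,Y_1,Y_2) − H(Y_1)`. -/
noncomputable def IY2X1gY1 (μ : X → ℝ) (P : X → X → ℝ) (W : X → Y → ℝ) : ℝ :=
  ent (jointX1Y1 μ W) + ent (jointYY μ P W) - ent (jointX1Y1Y2 μ P W) -
    ent (nuDist μ W)

/-- Mutual information `I(X_2; Y_1) = H(X_2) + H(Y_1) − H(X_2, Y_1)`. -/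
noncomputable def IX2Y1 (μ : X → ℝ) (P : X → X → ℝ) (W : X → Y → ℝ) : ℝ :=
  ent μ + ent (nuDist μ W) - ent (jointX2Y1 μ P W)

/-- The deterministic channel induced by an aggregation function `g : X → Y`:
`W_{x→y} = 1` iff `y = g x`. -/
noncomputable def detW [DecidableEq Y] (g : X → Y) : X → Y → ℝ :=
  fun x y => if g x = y then 1 else 0

/-- The row-stochastic matrix `R = P·W` for a deterministic aggregation `g`:
`R_{x→y} = ∑_{x' : g x' = y} P_{x→x'}`. -/
noncomputable def Rmat [DecidableEq Y] (P : X → X → ℝ) (g : X → Y) : X → Y → ℝ :=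
  fun x y => ∑ x', if g x' = y then P x x' else 0

/-- Kullback–Leibler divergence (base 2) between two probability mass functions on `Y`. -/
noncomputable def klDiv2 (p q : Y → ℝ) : ℝ :=
  ∑ y, p y * Real.logb 2 (p y / q y)

end Defs


private lemma mul_logb_mul_aux (a b : ℝ) (ha : 0 < a) :
    (a * b) * Real.logb 2 (a * b) = (a * b) * (Real.logb 2 a + Real.logb 2 b) := by
  rcases eq_or_ne b 0 with h | h
  · simp [h]
  · rw [Real.logb_mul ha.ne' h]

private lemma inv_pow_aux {X : Type} [Fintype X] [DecidableEq X]
    (μ : X → ℝ) (P : X → X → ℝ)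
    (hinv : ∀ x', ∑ x, μ x * P x x' = μ x') :
    ∀ n x', ∑ x, μ x * ((Matrix.of fun a b => P a b) ^ n) x x' = μ x' := by
  intro n
  induction n with
  | zero =>
    intro x'
    simp [Matrix.one_apply]
  | succ n ih =>
    intro x'
    have h1 : ∀ x, ((Matrix.of fun a b => P a b) ^ (n+1)) x x'
        = ∑ z, ((Matrix.of fun a b => P a b) ^ n) x z * P z x' := by
      intro x
      rw [pow_succ, Matrix.mul_apply]
      rfl
    calc ∑ x, μ x * ((Matrix.of fun a b => P a b) ^ (n+1)) x x'
        = ∑ x, ∑ z, μ x * ((Matrix.of fun a b => P a b) ^ n) x z * P z x' := by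
          refine Finset.sum_congr rfl fun x _ => ?_
          rw [h1, Finset.mul_sum]
          exact Finset.sum_congr rfl fun z _ => by ring
      _ = ∑ z, (∑ x, μ x * ((Matrix.of fun a b => P a b) ^ n) x z) * P z x' := by
          rw [Finset.sum_comm]
          exact Finset.sum_congr rfl fun z _ => (Finset.sum_mul _ _ _).symm
      _ = ∑ z, μ z * P z x' := by
          exact Finset.sum_congr rfl fun z _ => by rw [ih z]
      _ = μ x' := hinv x'

/-- For a surjective deterministic aggregation `g` with `Y_k = g(X_k)`,
`R = P·W` (i.e., `R_{x→y} = ∑_{x' : g x' = y} P_{x→x'}`) and `Q` the transition matrix of the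
best Markov approximation of `Y` (`Q_{y→y'} = P(Y_2 = y' | Y_1 = y)`, pinned down by
`Q_{y→y'}·P(Y_1 = y) = P(Y_1 = y, Y_2 = y')`), the lumpability cost satisfies
`C_L(X,g) = ∑_x μ_x · D(R_{x→·} ‖ Q_{g(x)→·})`. -/
theorem CL_eq_sum_klDiv
    {X Y : Type} [Fintype X] [Fintype Y] [Nonempty X] [Nonempty Y]
    [DecidableEq X] [DecidableEq Y]
    (μ : X → ℝ) (P : X → X → ℝ) (g : X → Y) (hg : Function.Surjective g)
    (hμ0 : ∀ x, 0 ≤ μ x) (hμ1 : ∑ x, μ x = 1)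
    (hP0 : ∀ x x', 0 ≤ P x x') (hP1 : ∀ x, ∑ x', P x x' = 1)
    (hinv : ∀ x', ∑ x, μ x * P x x' = μ x')
    (hirr : IrreducibleAperiodic (Matrix.of fun a b => P a b))
    (Q : Y → Y → ℝ)
    (hQ : ∀ y y', Q y y' * nuDist μ (detW g) y = jointYY μ P (detW g) (y, y')) :
    CL μ P (detW g) =
      ∑ x, μ x * klDiv2 (fun y => Rmat P g x y) (fun y => Q (g x) y) := by
  classical
  -- positivity of μ
  have hμpos : ∀ x, 0 < μ x := by
    obtain ⟨N, hN⟩ := hirr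
    obtain ⟨x0, hx0⟩ : ∃ x0, 0 < μ x0 := by
      by_contra h
      push_neg at h
      have : ∑ x, μ x = 0 := Finset.sum_eq_zero fun x _ => le_antisymm (h x) (hμ0 x)
      rw [hμ1] at this; norm_num at this
    intro x'
    have hpow := inv_pow_aux μ P hinv N x'
    rw [← hpow]
    refine Finset.sum_pos' (fun x _ => mul_nonneg (hμ0 x) (hN N le_rfl x x').le) ?_
    exact ⟨x0, Finset.mem_univ x0, mul_pos hx0 (hN N le_rfl x0 x')⟩
  -- basic facts about R
  have hRnn : ∀ x y, 0 ≤ Rmat P g x y := by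
    intro x y
    refine Finset.sum_nonneg fun x' _ => ?_
    split
    · exact hP0 x x'
    · exact le_rfl
  have hRsum : ∀ x, ∑ y, Rmat P g x y = 1 := by
    intro x
    unfold Rmat
    rw [Finset.sum_comm]
    simp [hP1 x]
  -- ν
  have hνeq : ∀ y, nuDist μ (detW g) y = ∑ x, if g x = y then μ x else 0 := by
    intro y
    unfold nuDist detW
    exact Finset.sum_congr rfl fun x _ => by split <;> simp
  have hνpos : ∀ y, 0 < nuDist μ (detW g) y := by
    intro y
    obtain ⟨x0, hx0⟩ := hg y
    rw [hνeq]
    refine Finset.sum_pos' (fun x _ => by split; exacts [(hμpos x).le, le_rfl]) ?_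
    exact ⟨x0, Finset.mem_univ x0, by simp [hx0, hμpos x0]⟩
  -- joint (Y1,Y2)
  have hJ : ∀ y y', jointYY μ P (detW g) (y, y')
      = ∑ x, if g x = y then μ x * Rmat P g x y' else 0 := by
    intro y y'
    unfold jointYY detW Rmat
    refine Finset.sum_congr rfl fun x _ => ?_
    by_cases h : g x = y
    · simp only [h, if_true, mul_one, Finset.mul_sum]
      refine Finset.sum_congr rfl fun x' _ => ?_
      by_cases h' : g x' = y' <;> simp [h']
    · simp [h]
  have hJsum : ∀ y, ∑ y', jointYY μ P (detW g) (y, y') = nuDist μ (detW g) y := by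
    intro y
    rw [hνeq]
    calc ∑ y', jointYY μ P (detW g) (y, y')
        = ∑ y', ∑ x, if g x = y then μ x * Rmat P g x y' else 0 := by
          exact Finset.sum_congr rfl fun y' _ => hJ y y'
      _ = ∑ x, ∑ y', if g x = y then μ x * Rmat P g x y' else 0 := Finset.sum_comm
      _ = ∑ x, if g x = y then μ x else 0 := by
          refine Finset.sum_congr rfl fun x _ => ?_
          by_cases h : g x = y
          · simp only [h, if_true, ← Finset.mul_sum, hRsum x, mul_one]
          · simp [h]
  -- joint (X1,Y2)
  have hK : ∀ x y, jointX1Y2 μ P (detW g) (x, y) = μ x * Rmat P g x y := by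
    intro x y
    unfold jointX1Y2 detW Rmat
    rw [Finset.mul_sum]
    refine Finset.sum_congr rfl fun x' _ => ?_
    by_cases h : g x' = y <;> simp [h]
  -- positivity of Q where needed
  have hQpos : ∀ x y, 0 < Rmat P g x y → 0 < Q (g x) y := by
    intro x y hR
    have hJpos : 0 < jointYY μ P (detW g) (g x, y) := by
      rw [hJ]
      refine Finset.sum_pos' (fun z _ => by
        split; exacts [mul_nonneg (hμpos z).le (hRnn z y), le_rfl]) ?_
      exact ⟨x, Finset.mem_univ x, by simp [mul_pos (hμpos x) hR]⟩
    have := hQ (g x) y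
    nlinarith [hνpos (g x), mul_pos (hνpos (g x)) hJpos]
  -- L2 : ent K - ent μ
  have hL2 : ent (jointX1Y2 μ P (detW g)) - ent μ
      = - ∑ x, μ x * ∑ y, Rmat P g x y * Real.logb 2 (Rmat P g x y) := by
    have hperx : ∀ x, ∑ y, jointX1Y2 μ P (detW g) (x, y)
          * Real.logb 2 (jointX1Y2 μ P (detW g) (x, y))
        = μ x * Real.logb 2 (μ x)
          + μ x * ∑ y, Rmat P g x y * Real.logb 2 (Rmat P g x y) := by
      intro x
      calc ∑ y, jointX1Y2 μ P (detW g) (x, y)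
            * Real.logb 2 (jointX1Y2 μ P (detW g) (x, y))
          = ∑ y, (Rmat P g x y * (μ x * Real.logb 2 (μ x))
              + μ x * (Rmat P g x y * Real.logb 2 (Rmat P g x y))) := by
            refine Finset.sum_congr rfl fun y _ => ?_
            rw [hK, mul_logb_mul_aux (μ x) (Rmat P g x y) (hμpos x)]
            ring
        _ = (∑ y, Rmat P g x y) * (μ x * Real.logb 2 (μ x))
              + μ x * ∑ y, Rmat P g x y * Real.logb 2 (Rmat P g x y) := by
            rw [Finset.sum_add_distrib, Finset.sum_mul, ← Finset.mul_sum]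
        _ = μ x * Real.logb 2 (μ x)
              + μ x * ∑ y, Rmat P g x y * Real.logb 2 (Rmat P g x y) := by
            rw [hRsum x, one_mul]
    unfold ent
    rw [Fintype.sum_prod_type]
    have : ∑ x, ∑ y, jointX1Y2 μ P (detW g) (x, y)
          * Real.logb 2 (jointX1Y2 μ P (detW g) (x, y))
        = ∑ x, μ x * Real.logb 2 (μ x)
          + ∑ x, μ x * ∑ y, Rmat P g x y * Real.logb 2 (Rmat P g x y) := by
      rw [← Finset.sum_add_distrib]
      exact Finset.sum_congr rfl fun x _ => hperx x
    rw [this]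
    ring
  -- L1 : ent J - ent ν
  have hL1 : ent (jointYY μ P (detW g)) - ent (nuDist μ (detW g))
      = - ∑ x, μ x * ∑ y, Rmat P g x y * Real.logb 2 (Q (g x) y) := by
    have hpery : ∀ y, ∑ y', jointYY μ P (detW g) (y, y')
          * Real.logb 2 (jointYY μ P (detW g) (y, y'))
        = nuDist μ (detW g) y * Real.logb 2 (nuDist μ (detW g) y)
          + ∑ y', jointYY μ P (detW g) (y, y') * Real.logb 2 (Q y y') := by
      intro y
      calc ∑ y', jointYY μ P (detW g) (y, y')
            * Real.logb 2 (jointYY μ P (detW g) (y, y'))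
          = ∑ y', (jointYY μ P (detW g) (y, y') * Real.logb 2 (nuDist μ (detW g) y)
              + jointYY μ P (detW g) (y, y') * Real.logb 2 (Q y y')) := by
            refine Finset.sum_congr rfl fun y' _ => ?_
            have h1 : jointYY μ P (detW g) (y, y')
                = nuDist μ (detW g) y * Q y y' := by
              rw [← hQ y y']; ring
            rw [h1, mul_logb_mul_aux (nuDist μ (detW g) y) (Q y y') (hνpos y)]
            ring
        _ = (∑ y', jointYY μ P (detW g) (y, y')) * Real.logb 2 (nuDist μ (detW g) y)
              + ∑ y', jointYY μ P (detW g) (y, y') * Real.logb 2 (Q y y') := by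
            rw [Finset.sum_add_distrib, Finset.sum_mul]
        _ = nuDist μ (detW g) y * Real.logb 2 (nuDist μ (detW g) y)
              + ∑ y', jointYY μ P (detW g) (y, y') * Real.logb 2 (Q y y') := by
            rw [hJsum y]
    have hregroup : ∑ y, ∑ y', jointYY μ P (detW g) (y, y') * Real.logb 2 (Q y y')
        = ∑ x, μ x * ∑ y, Rmat P g x y * Real.logb 2 (Q (g x) y) := by
      calc ∑ y, ∑ y', jointYY μ P (detW g) (y, y') * Real.logb 2 (Q y y')
          = ∑ y, ∑ y', ∑ x,
              (if g x = y then μ x * Rmat P g x y' * Real.logb 2 (Q y y') else 0) := by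
            refine Finset.sum_congr rfl fun y _ => Finset.sum_congr rfl fun y' _ => ?_
            rw [hJ, Finset.sum_mul]
            exact Finset.sum_congr rfl fun x _ => by split <;> simp
        _ = ∑ y, ∑ x, ∑ y',
              (if g x = y then μ x * Rmat P g x y' * Real.logb 2 (Q y y') else 0) :=
            Finset.sum_congr rfl fun y _ => Finset.sum_comm
        _ = ∑ x, ∑ y, ∑ y',
              (if g x = y then μ x * Rmat P g x y' * Real.logb 2 (Q y y') else 0) :=
            Finset.sum_comm
        _ = ∑ x, ∑ y', ∑ y,
              (if g x = y then μ x * Rmat P g x y' * Real.logb 2 (Q y y') else 0) :=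
            Finset.sum_congr rfl fun x _ => Finset.sum_comm
        _ = ∑ x, ∑ y', μ x * Rmat P g x y' * Real.logb 2 (Q (g x) y') := by
            refine Finset.sum_congr rfl fun x _ => Finset.sum_congr rfl fun y' _ => ?_
            rw [Finset.sum_ite_eq]
            simp
        _ = ∑ x, μ x * ∑ y, Rmat P g x y * Real.logb 2 (Q (g x) y) := by
            refine Finset.sum_congr rfl fun x _ => ?_
            rw [Finset.mul_sum]
            exact Finset.sum_congr rfl fun y _ => by ring
    unfold ent
    rw [Fintype.sum_prod_type]
    have : ∑ y, ∑ y', jointYY μ P (detW g) (y, y')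
          * Real.logb 2 (jointYY μ P (detW g) (y, y'))
        = ∑ y, nuDist μ (detW g) y * Real.logb 2 (nuDist μ (detW g) y)
          + ∑ x, μ x * ∑ y, Rmat P g x y * Real.logb 2 (Q (g x) y) := by
      rw [← hregroup, ← Finset.sum_add_distrib]
      exact Finset.sum_congr rfl fun y _ => hpery y
    rw [this]
    ring
  -- conclude
  unfold CL HY2gY1 HY2gX1
  rw [show ent (jointYY μ P (detW g)) - ent (nuDist μ (detW g))
        - (ent (jointX1Y2 μ P (detW g)) - ent μ)
      = (ent (jointYY μ P (detW g)) - ent (nuDist μ (detW g)))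
        - (ent (jointX1Y2 μ P (detW g)) - ent μ) by ring, hL1, hL2]
  rw [show (- ∑ x, μ x * ∑ y, Rmat P g x y * Real.logb 2 (Q (g x) y))
        - (- ∑ x, μ x * ∑ y, Rmat P g x y * Real.logb 2 (Rmat P g x y))
      = ∑ x, (μ x * ∑ y, Rmat P g x y * Real.logb 2 (Rmat P g x y)
          - μ x * ∑ y, Rmat P g x y * Real.logb 2 (Q (g x) y)) by
        rw [Finset.sum_sub_distrib]; ring]
  refine Finset.sum_congr rfl fun x _ => ?_
  unfold klDiv2
  rw [← mul_sub, ← Finset.sum_sub_distrib]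
  congr 1
  refine Finset.sum_congr rfl fun y _ => ?_
  rcases eq_or_lt_of_le (hRnn x y) with h | h
  · simp [← h]
  · rw [Real.logb_div h.ne' (hQpos x y h).ne']
    ring
end

section
/- Let g : 𝒳 → 𝒴 be surjective, Y_k = g(X_k), R := PW (R_{x→y} = Σ_{x' : g(x') = y} P_{x→x'}), and Q the transition matrix of the best Markov approximation of Y (Q_{y→y'} = P(Y_2 = y' | Y_1 = y)). Then for every x ∈ 𝒳 and every subset B ⊆ 𝒴: | Σ_{y∈B} ( R_{x→y} − Q_{g(x)→y} ) | ≤ sqrt( ln(2) · C_L(X,g) / ( 2 · min_{x'∈𝒳} μ_{x'} ) ). -/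
open Filter Real

/-! For a deterministic aggregation, `Q (g x)` is the `μ`-weighted average of the rows `R x'`
over the fibre of `g x`. By the chain rule both conditional entropies are averages of row
entropies, and since the cross entropy `∑ R log Q` can be averaged over `X₁` instead of `Y₁`,
`C_L = ∑ₓ μₓ D(Rₓ ‖ Q_{g x})`. Pinsker's inequality for the row `x` then gives
`2 (Rₓ(B) − Q_{g x}(B))² ≤ ln 2 · D(Rₓ ‖ Q_{g x}) ≤ ln 2 · C_L / μₓ`.
Pinsker's inequality reduces, by the log-sum inequality on `B` and `Bᶜ`, to two points, where
`t ↦ −a log t − (1 − a) log (1 − t) − 2 (a − t)²` is monotone on `[a, b]`. -/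

open Finset

lemma sum_mul_log_div_sum_le {ι : Type*} (s : Finset ι) {p q : ι → ℝ}
    (hp : ∀ i ∈ s, 0 ≤ p i) (hq : ∀ i ∈ s, 0 ≤ q i) (hpq : ∀ i ∈ s, q i = 0 → p i = 0) :
    (∑ i ∈ s, p i) * log ((∑ i ∈ s, p i) / ∑ i ∈ s, q i) ≤
      ∑ i ∈ s, p i * log (p i / q i) := by
  have hcancel : ∀ i ∈ s, q i * (p i / q i) = p i := fun i hi => by
    rcases eq_or_ne (q i) 0 with h | h
    · simp [h, hpq i hi h]
    · exact mul_div_cancel₀ _ h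
  rcases (sum_nonneg hq).eq_or_lt with hQ | hQ
  · have hp0 : ∀ i ∈ s, p i = 0 := fun i hi =>
      hpq i hi ((sum_eq_zero_iff_of_nonneg hq).mp hQ.symm i hi)
    have hK : ∑ i ∈ s, p i * log (p i / q i) = 0 :=
      sum_eq_zero fun i hi => by rw [hp0 i hi, zero_mul]
    rw [sum_eq_zero hp0, hK, zero_mul]
  have hJensen := convexOn_mul_log.map_centerMass_le hq hQ
    (p := fun i => p i / q i) fun i hi => Set.mem_Ici.mpr (div_nonneg (hp i hi) (hq i hi))
  simp only [centerMass, Function.comp_def, smul_eq_mul, ← mul_assoc] at hJensen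
  rwa [sum_congr rfl hcancel,
    sum_congr rfl fun i hi => congrArg (· * log (p i / q i)) (hcancel i hi),
    inv_mul_eq_div, inv_mul_eq_div, div_mul_eq_mul_div, div_le_div_iff_of_pos_right hQ] at hJensen

lemma monotoneOn_binary_cross_entropy_sub_two_mul_sq {a b : ℝ} (ha : 0 ≤ a) (hb : b < 1) :
    MonotoneOn (fun t => -(a * log t) - (1 - a) * log (1 - t) - 2 * (a - t) ^ 2)
      (Set.Icc a b) := by
  have hderiv : ∀ t ∈ Set.Ioo a b, HasDerivAt
      (fun t => -(a * log t) - (1 - a) * log (1 - t) - 2 * (a - t) ^ 2)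
      (-(a / t) + (1 - a) / (1 - t) + 4 * (a - t)) t := by
    intro t ht
    have ht0 : t ≠ 0 := (ha.trans_lt ht.1).ne'
    have ht1 : 1 - t ≠ 0 := by linarith [ht.2]
    have h1 := ((hasDerivAt_log ht0).const_mul a).neg
    have h2 := (((hasDerivAt_id t).const_sub 1).log ht1).const_mul (1 - a)
    have h3 := (((hasDerivAt_id t).const_sub a).pow 2).const_mul 2
    exact ((h1.sub h2).sub h3).congr_deriv (by simp only [id]; ring)
  have hderiv_nonneg : ∀ t ∈ Set.Ioo a b,
      0 ≤ -(a / t) + (1 - a) / (1 - t) + 4 * (a - t) := by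
    intro t ht
    have ht0 : 0 < t := ha.trans_lt ht.1
    have ht1 : 0 < 1 - t := by linarith [ht.2]
    have key : -(a / t) + (1 - a) / (1 - t) + 4 * (a - t) =
        (t - a) * (1 - 2 * t) ^ 2 / (t * (1 - t)) := by
      field_simp
      ring
    rw [key]
    exact div_nonneg (mul_nonneg (by linarith [ht.1]) (sq_nonneg _)) (by positivity)
  have hlog : ContinuousOn (fun t => a * log t) (Set.Icc a b) := by
    rcases ha.eq_or_lt with rfl | ha
    · simpa using continuousOn_const
    · exact continuousOn_const.mul (continuousOn_log.mono fun t ht => (ha.trans_le ht.1).ne')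
  have hlog1 : ContinuousOn (fun t => log (1 - t)) (Set.Icc a b) :=
    ContinuousOn.log (by fun_prop) fun t ht => by linarith [ht.2]
  refine monotoneOn_of_deriv_nonneg (convex_Icc a b)
    ((hlog.neg.sub (continuousOn_const.mul hlog1)).sub (by fun_prop)) ?_ ?_ <;>
    intro t ht <;> rw [interior_Icc] at ht
  · exact (hderiv t ht).differentiableAt.differentiableWithinAt
  · exact (hderiv t ht).deriv ▸ hderiv_nonneg t ht

lemma two_mul_sq_sub_le_binary_kl_of_lt_one {a b : ℝ} (ha : 0 ≤ a) (hab : a ≤ b) (hb : b < 1) :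
    2 * (a - b) ^ 2 ≤ a * log (a / b) + (1 - a) * log ((1 - a) / (1 - b)) := by
  have hmono := monotoneOn_binary_cross_entropy_sub_two_mul_sq ha hb
    (Set.left_mem_Icc.mpr hab) (Set.right_mem_Icc.mpr hab) hab
  have hdiv : a * log (a / b) = a * log a - a * log b := by
    rcases ha.eq_or_lt with rfl | ha
    · simp
    · rw [log_div ha.ne' (ha.trans_le hab).ne']
      ring
  rw [hdiv, log_div (by linarith) (by linarith)]
  simp only [sub_self] at hmono
  linarith

lemma two_mul_sq_sub_le_binary_kl {a b : ℝ} (ha : 0 ≤ a) (hab : a ≤ b) (hb : b ≤ 1)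
    (hb1 : b = 1 → a = 1) :
    2 * (a - b) ^ 2 ≤ a * log (a / b) + (1 - a) * log ((1 - a) / (1 - b)) := by
  rcases hb.lt_or_eq with hb | rfl
  · exact two_mul_sq_sub_le_binary_kl_of_lt_one ha hab hb
  · simp [hb1 rfl]

lemma two_mul_sq_sum_sub_le_sum_mul_log_div {ι : Type*} [Fintype ι] {p q : ι → ℝ}
    (hp : ∀ i, 0 ≤ p i) (hq : ∀ i, 0 ≤ q i) (hp1 : ∑ i, p i = 1) (hq1 : ∑ i, q i = 1)
    (hpq : ∀ i, q i = 0 → p i = 0) (s : Finset ι) :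
    2 * (∑ i ∈ s, (p i - q i)) ^ 2 ≤ ∑ i, p i * log (p i / q i) := by
  classical
  have hcompl : ∀ (f : ι → ℝ) (t : Finset ι), ∑ i ∈ tᶜ, f i = ∑ i, f i - ∑ i ∈ t, f i :=
    fun f t => eq_sub_of_add_eq' (sum_add_sum_compl t f)
  have hle : ∀ t : Finset ι, ∑ i ∈ t, p i ≤ ∑ i ∈ t, q i →
      2 * (∑ i ∈ t, p i - ∑ i ∈ t, q i) ^ 2 ≤ ∑ i, p i * log (p i / q i) := by
    intro t hpqt
    have hq1t : ∑ i ∈ t, q i = 1 → ∑ i ∈ t, p i = 1 := fun h => by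
      have hqc : ∑ i ∈ tᶜ, q i = 0 := by rw [hcompl, hq1, h, sub_self]
      have hpc : ∑ i ∈ tᶜ, p i = 0 := sum_eq_zero fun i hi =>
        hpq i ((sum_eq_zero_iff_of_nonneg fun i _ => hq i).mp hqc i hi)
      linarith [hcompl p t]
    have hbin := two_mul_sq_sub_le_binary_kl (sum_nonneg fun i _ => hp i) hpqt
      (by linarith [hcompl q t, sum_nonneg fun i (_ : i ∈ tᶜ) => hq i]) hq1t
    have hsum_t := sum_mul_log_div_sum_le t (fun i _ => hp i) (fun i _ => hq i) fun i _ => hpq i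
    have hsum_tc := sum_mul_log_div_sum_le tᶜ (fun i _ => hp i) (fun i _ => hq i) fun i _ => hpq i
    rw [hcompl p, hcompl q, hp1, hq1] at hsum_tc
    linarith [sum_add_sum_compl t fun i => p i * log (p i / q i)]
  rw [sum_sub_distrib]
  rcases le_total (∑ i ∈ s, p i) (∑ i ∈ s, q i) with hs | hs
  · exact hle s hs
  · have := hle sᶜ (by rw [hcompl, hcompl, hp1, hq1]; linarith)
    rwa [hcompl, hcompl, hp1, hq1, show ∀ u v : ℝ, 1 - u - (1 - v) = -(u - v) by intros; ring,
      neg_sq] at this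

lemma log_two_mul_ent {A : Type} [Fintype A] (q : A → ℝ) :
    log 2 * ent q = ∑ a, negMulLog (q a) := by
  have : log 2 ≠ 0 := (log_pos one_lt_two).ne'
  simp only [ent, logb, negMulLog, mul_neg, mul_sum, ← sum_neg_distrib]
  exact sum_congr rfl fun a _ => by field_simp

lemma log_two_mul_klDiv2 {Y : Type} [Fintype Y] (p q : Y → ℝ) :
    log 2 * klDiv2 p q = ∑ y, p y * log (p y / q y) := by
  have : log 2 ≠ 0 := (log_pos one_lt_two).ne'
  simp only [klDiv2, logb, mul_sum]
  exact sum_congr rfl fun a _ => by field_simp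

lemma log_two_mul_ent_sub_ent_of_eq_mul {A B : Type} [Fintype A] [Fintype B]
    {p : A × B → ℝ} {m : A → ℝ} {k : A → B → ℝ} (hp : ∀ a b, p (a, b) = m a * k a b)
    (hm : ∀ a, ∑ b, m a * k a b = m a) :
    log 2 * (ent p - ent m) = ∑ a, m a * ∑ b, negMulLog (k a b) := by
  have hmarg : ∀ a, (∑ b, k a b) * negMulLog (m a) = negMulLog (m a) := fun a => by
    rw [negMulLog, ← mul_assoc, mul_neg, mul_comm _ (m a), mul_sum, hm]
  rw [mul_sub, log_two_mul_ent, log_two_mul_ent, Fintype.sum_prod_type]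
  simp only [hp, negMulLog_mul, sum_add_distrib, ← sum_mul, ← mul_sum, hmarg, add_sub_cancel_left]

section Aggregation

variable {X Y : Type} [Fintype X] [DecidableEq Y]
  {μ : X → ℝ} {P : X → X → ℝ} {g : X → Y}

lemma Rmat_nonneg (hP0 : ∀ x x', 0 ≤ P x x') (x : X) (y : Y) : 0 ≤ Rmat P g x y :=
  sum_nonneg fun x' _ => by split_ifs <;> simp [hP0]

lemma sum_Rmat [Fintype Y] (hP1 : ∀ x, ∑ x', P x x' = 1) (x : X) : ∑ y, Rmat P g x y = 1 := by
  simp only [Rmat]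
  rw [sum_comm]
  simp [hP1]

lemma jointX1Y2_detW (x : X) (y : Y) :
    jointX1Y2 μ P (detW g) (x, y) = μ x * Rmat P g x y := by
  simp [jointX1Y2, Rmat, detW, mul_sum]

lemma jointYY_detW (y y' : Y) :
    jointYY μ P (detW g) (y, y') = ∑ x, if g x = y then μ x * Rmat P g x y' else 0 := by
  refine sum_congr rfl fun x _ => ?_
  split_ifs with h <;> simp [detW, Rmat, h, mul_sum]

lemma nuDist_detW (y : Y) : nuDist μ (detW g) y = ∑ x, if g x = y then μ x else 0 := by
  simp [nuDist, detW]

lemma sum_jointYY_detW [Fintype Y] (hP1 : ∀ x, ∑ x', P x x' = 1) (y : Y) :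
    ∑ y', jointYY μ P (detW g) (y, y') = nuDist μ (detW g) y := by
  simp_rw [jointYY_detW, nuDist_detW]
  rw [sum_comm]
  refine sum_congr rfl fun x _ => ?_
  split_ifs <;> simp [← mul_sum, sum_Rmat hP1]

lemma mul_Rmat_le_jointYY_detW (hμ : ∀ x, 0 ≤ μ x) (hP0 : ∀ x x', 0 ≤ P x x') (x : X) (y : Y) :
    μ x * Rmat P g x y ≤ jointYY μ P (detW g) (g x, y) := by
  rw [jointYY_detW]
  refine le_of_eq_of_le (by simp) (single_le_sum (f := fun x' => if g x' = g x then
    μ x' * Rmat P g x' y else 0) (fun x' _ => ?_) (mem_univ x))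
  split_ifs
  exacts [mul_nonneg (hμ x') (Rmat_nonneg hP0 x' y), le_rfl]

lemma le_nuDist_detW (hμ : ∀ x, 0 ≤ μ x) (x : X) : μ x ≤ nuDist μ (detW g) (g x) := by
  rw [nuDist_detW]
  refine le_of_eq_of_le (by simp) (single_le_sum (f := fun x' => if g x' = g x then
    μ x' else 0) (fun x' _ => ?_) (mem_univ x))
  split_ifs
  exacts [hμ x', le_rfl]

section BestMarkovApproximation

variable {Q : Y → Y → ℝ}
  (hQ : ∀ y y', Q y y' * nuDist μ (detW g) y = jointYY μ P (detW g) (y, y'))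
include hQ

lemma bestMarkov_nonneg (hμ : ∀ x, 0 ≤ μ x) (hP0 : ∀ x x', 0 ≤ P x x') {y : Y}
    (hy : 0 < nuDist μ (detW g) y) (y' : Y) : 0 ≤ Q y y' := by
  refine nonneg_of_mul_nonneg_left ?_ hy
  rw [hQ, jointYY_detW]
  exact sum_nonneg fun x _ => by
    split_ifs
    exacts [mul_nonneg (hμ x) (Rmat_nonneg hP0 x y'), le_rfl]

lemma bestMarkov_sum_eq_one [Fintype Y] (hP1 : ∀ x, ∑ x', P x x' = 1) {y : Y}
    (hy : 0 < nuDist μ (detW g) y) : ∑ y', Q y y' = 1 := by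
  refine mul_right_cancel₀ hy.ne' ?_
  rw [sum_mul, one_mul, sum_congr rfl fun y' _ => hQ y y', sum_jointYY_detW hP1]

lemma bestMarkov_pos_of_Rmat_pos (hμ : ∀ x, 0 ≤ μ x) (hP0 : ∀ x x', 0 ≤ P x x') {x : X}
    {y : Y} (hx : 0 < μ x) (hR : 0 < Rmat P g x y) : 0 < Q (g x) y := by
  refine pos_of_mul_pos_left ?_ ((hμ x).trans (le_nuDist_detW (g := g) hμ x))
  rw [hQ]
  exact (mul_pos hx hR).trans_le (mul_Rmat_le_jointYY_detW hμ hP0 x y)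

lemma sum_nuDist_mul_sum_negMulLog_bestMarkov [Fintype Y] :
    ∑ y, nuDist μ (detW g) y * ∑ y', negMulLog (Q y y') =
      -∑ x, μ x * ∑ y, Rmat P g x y * log (Q (g x) y) := by
  have hfiber : ∀ y, ∑ y', jointYY μ P (detW g) (y, y') * log (Q y y') =
      ∑ x, if g x = y then μ x * ∑ y', Rmat P g x y' * log (Q y y') else 0 := fun y => by
    simp_rw [jointYY_detW, sum_mul, ite_mul, zero_mul]
    rw [sum_comm]
    refine sum_congr rfl fun x _ => ?_
    split_ifs <;> simp [mul_sum, mul_assoc]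
  calc ∑ y, nuDist μ (detW g) y * ∑ y', negMulLog (Q y y')
      = -∑ y, ∑ y', jointYY μ P (detW g) (y, y') * log (Q y y') := by
        simp only [← hQ, mul_sum, negMulLog, ← sum_neg_distrib]
        exact sum_congr rfl fun y _ => sum_congr rfl fun y' _ => by ring
    _ = -∑ x, μ x * ∑ y, Rmat P g x y * log (Q (g x) y) := by
        simp_rw [hfiber]
        rw [sum_comm]
        simp

theorem CL_detW_eq_sum_klDiv2 [Fintype Y] (hμ : ∀ x, 0 < μ x) (hP0 : ∀ x x', 0 ≤ P x x')
    (hP1 : ∀ x, ∑ x', P x x' = 1) :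
    CL μ P (detW g) = ∑ x, μ x * klDiv2 (Rmat P g x) (Q (g x)) := by
  have hX : log 2 * HY2gX1 μ P (detW g) = ∑ x, μ x * ∑ y, negMulLog (Rmat P g x y) :=
    log_two_mul_ent_sub_ent_of_eq_mul jointX1Y2_detW fun x => by
      rw [← mul_sum, sum_Rmat hP1, mul_one]
  have hY : log 2 * HY2gY1 μ P (detW g) =
      ∑ y, nuDist μ (detW g) y * ∑ y', negMulLog (Q y y') :=
    log_two_mul_ent_sub_ent_of_eq_mul (fun y y' => by rw [← hQ, mul_comm])
      fun y => by simp_rw [mul_comm (nuDist μ (detW g) y), hQ, sum_jointYY_detW hP1]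
  have hrow : ∀ x, log 2 * klDiv2 (Rmat P g x) (Q (g x)) =
      -∑ y, negMulLog (Rmat P g x y) - ∑ y, Rmat P g x y * log (Q (g x) y) := by
    intro x
    rw [log_two_mul_klDiv2, ← sum_neg_distrib, ← sum_sub_distrib]
    refine sum_congr rfl fun y _ => ?_
    rcases (Rmat_nonneg (g := g) hP0 x y).eq_or_lt with hR | hR
    · simp [← hR]
    · rw [log_div hR.ne' (bestMarkov_pos_of_Rmat_pos hQ (fun x => (hμ x).le) hP0 (hμ x) hR).ne',
        negMulLog]
      ring
  refine mul_left_cancel₀ (log_pos one_lt_two).ne' ?_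
  calc log 2 * CL μ P (detW g)
      = log 2 * HY2gY1 μ P (detW g) - log 2 * HY2gX1 μ P (detW g) := mul_sub _ _ _
    _ = ∑ x, μ x * (log 2 * klDiv2 (Rmat P g x) (Q (g x))) := by
      simp only [hY, sum_nuDist_mul_sum_negMulLog_bestMarkov hQ, hX, hrow, mul_sub, mul_neg,
        sum_sub_distrib, sum_neg_distrib]
      ring
    _ = log 2 * ∑ x, μ x * klDiv2 (Rmat P g x) (Q (g x)) := by
      simp only [mul_sum, mul_left_comm]

lemma two_mul_sq_sum_sub_bestMarkov_le [Fintype Y] (hμ : ∀ x, 0 < μ x)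
    (hP0 : ∀ x x', 0 ≤ P x x') (hP1 : ∀ x, ∑ x', P x x' = 1) (x : X) (s : Finset Y) :
    2 * (∑ y ∈ s, (Rmat P g x y - Q (g x) y)) ^ 2 ≤
      log 2 * klDiv2 (Rmat P g x) (Q (g x)) := by
  have hμ0 : ∀ x, 0 ≤ μ x := fun x => (hμ x).le
  have hν : 0 < nuDist μ (detW g) (g x) := (hμ x).trans_le (le_nuDist_detW hμ0 x)
  rw [log_two_mul_klDiv2]
  refine two_mul_sq_sum_sub_le_sum_mul_log_div (Rmat_nonneg hP0 x)
    (bestMarkov_nonneg hQ hμ0 hP0 hν) (sum_Rmat hP1 x) (bestMarkov_sum_eq_one hQ hP1 hν)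
    (fun y hQy => ?_) s
  by_contra hR
  exact (bestMarkov_pos_of_Rmat_pos hQ hμ0 hP0 (hμ x)
    ((Rmat_nonneg hP0 x y).lt_of_ne' hR)).ne' hQy

end BestMarkovApproximation

end Aggregation

theorem pinsker_bound_for_aggregation_general
    {X Y : Type} [Fintype X] [Fintype Y] [Nonempty X]
    [DecidableEq Y]
    (μ : X → ℝ) (P : X → X → ℝ) (g : X → Y)
    (hP0 : ∀ x x', 0 ≤ P x x') (hP1 : ∀ x, ∑ x', P x x' = 1)
    (hμpos : ∀ x, 0 < μ x)
    (Q : Y → Y → ℝ)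
    (hQ : ∀ y y', Q y y' * nuDist μ (detW g) y = jointYY μ P (detW g) (y, y')) :
    ∀ (x : X) (B : Finset Y),
      |∑ y ∈ B, (Rmat P g x y - Q (g x) y)| ≤
        Real.sqrt (Real.log 2 * CL μ P (detW g) /
          (2 * Finset.univ.inf' Finset.univ_nonempty μ)) := by
  intro x B
  have hpinsker := two_mul_sq_sum_sub_bestMarkov_le hQ hμpos hP0 hP1
  have hrow : μ x * (log 2 * klDiv2 (Rmat P g x) (Q (g x))) ≤ log 2 * CL μ P (detW g) := by
    rw [CL_detW_eq_sum_klDiv2 hQ hμpos hP0 hP1, mul_sum]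
    simp_rw [mul_left_comm (log 2)]
    refine single_le_sum (f := fun x' => μ x' * (log 2 * klDiv2 (Rmat P g x') (Q (g x'))))
      (fun x' _ => mul_nonneg (hμpos x').le ?_) (mem_univ x)
    simpa using hpinsker x' ∅
  have hmin_pos : 0 < univ.inf' univ_nonempty μ := (lt_inf'_iff _).mpr fun x' _ => hμpos x'
  have hmin_le : univ.inf' univ_nonempty μ ≤ μ x := inf'_le μ (mem_univ x)
  set d := ∑ y ∈ B, (Rmat P g x y - Q (g x) y)
  refine Real.abs_le_sqrt ((le_div_iff₀ (by positivity)).mpr ?_)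
  calc d ^ 2 * (2 * univ.inf' univ_nonempty μ)
      ≤ μ x * (2 * d ^ 2) := by nlinarith [sq_nonneg d]
    _ ≤ μ x * (log 2 * klDiv2 (Rmat P g x) (Q (g x))) :=
      mul_le_mul_of_nonneg_left (hpinsker x B) (hμpos x).le
    _ ≤ log 2 * CL μ P (detW g) := hrow

/-- (Pinsker-type bound.) For a surjective deterministic aggregation `g`,
with `R = P·W` and `Q` the transition matrix of the best Markov approximation of `Y`, for
every `x` and every `B ⊆ Y`:
`|∑_{y∈B} (R_{x→y} − Q_{g(x)→y})| ≤ sqrt( ln 2 · C_L(X,g) / (2 · min_x μ_x) )`. -/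
theorem pinsker_bound_for_aggregation
    {X Y : Type} [Fintype X] [Fintype Y] [Nonempty X] [Nonempty Y]
    [DecidableEq X] [DecidableEq Y]
    (μ : X → ℝ) (P : X → X → ℝ) (g : X → Y) (hg : Function.Surjective g)
    (hμ0 : ∀ x, 0 ≤ μ x) (hμ1 : ∑ x, μ x = 1)
    (hP0 : ∀ x x', 0 ≤ P x x') (hP1 : ∀ x, ∑ x', P x x' = 1)
    (hinv : ∀ x', ∑ x, μ x * P x x' = μ x')
    (hirr : IrreducibleAperiodic (Matrix.of fun a b => P a b))
    (hμpos : ∀ x, 0 < μ x)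
    (Q : Y → Y → ℝ)
    (hQ : ∀ y y', Q y y' * nuDist μ (detW g) y = jointYY μ P (detW g) (y, y')) :
    ∀ (x : X) (B : Finset Y),
      |∑ y ∈ B, (Rmat P g x y - Q (g x) y)| ≤
        Real.sqrt (Real.log 2 * CL μ P (detW g) /
          (2 * Finset.univ.inf' Finset.univ_nonempty μ)) :=
  pinsker_bound_for_aggregation_general μ P g hP0 hP1 hμpos Q hQ
end

section
/- The lumpability cost is bounded above by the predictability cost: C_L(X,W) ≤ C_P(X,W), i.e., H(Y_2|Y_1) − H(Y_2|X_1) ≤ I(X_1;X_2) − I(Y_1;Y_2). -/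
open Filter Real

/-! Unfolding the definitions, `C_P − C_L = H(X₁|Y₂) − H(X₁|X₂)`: the `Y₁Y₂` terms cancel.
Since `X₁ → X₂ → Y₂` is a Markov chain, the chain rule for the kernels `P` and `W` together
with stationarity gives `H(X₁|X₂) = H(X₁|X₂,Y₂)`, and `H(X₁|X₂,Y₂) ≤ H(X₁|Y₂)` is the
submodularity `H(X₁,X₂,Y₂) + H(Y₂) ≤ H(X₁,Y₂) + H(X₂,Y₂)` of entropy. That in turn is Gibbs'
inequality against the coupling `p(x₁|y) p(x₂|y) p(y)`, under which `X₁` and `X₂` are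
conditionally independent given `Y₂`. -/

open Finset

section Entropy

variable {A B C : Type} [Fintype A] [Fintype B] [Fintype C]

theorem ent_eq_sum_negMulLog (q : A → ℝ) : ent q = (∑ a, negMulLog (q a)) / log 2 := by
  simp only [ent, logb, negMulLog, neg_mul, sum_neg_distrib, mul_div_assoc', sum_div, neg_div]

theorem ent_comp_equiv (e : A ≃ B) (q : B → ℝ) : ent (q ∘ e) = ent q := by
  simp only [ent, Function.comp_apply, e.sum_comp (fun b => q b * logb 2 (q b))]

theorem ent_mul_kernel (p : A → ℝ) (K : A → B → ℝ) (hK : ∀ a, ∑ b, K a b = 1) :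
    ent (fun ab : A × B => p ab.1 * K ab.1 ab.2) = ent p + ∑ a, p a * ent (K a) := by
  simp only [ent_eq_sum_negMulLog, mul_div_assoc', ← sum_div, ← add_div]
  congr 1
  simp only [negMulLog_mul, Fintype.sum_prod_type, sum_add_distrib, ← sum_mul, ← mul_sum, hK,
    one_mul]

theorem sum_mul_log_le_sum_mul_log {q s : A → ℝ} (hq : ∀ a, 0 ≤ q a) (hs : ∀ a, 0 ≤ s a)
    (hsupp : ∀ a, 0 < q a → 0 < s a) (hsum : ∑ a, s a ≤ ∑ a, q a) :
    ∑ a, q a * log (s a) ≤ ∑ a, q a * log (q a) := by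
  have hpt : ∀ a, q a * log (s a) - q a * log (q a) ≤ s a - q a := by
    intro a
    rcases (hq a).eq_or_lt with hqa | hqa
    · simp [← hqa, hs a]
    · have hlog := log_le_sub_one_of_pos (div_pos (hsupp a hqa) hqa)
      rw [log_div (hsupp a hqa).ne' hqa.ne'] at hlog
      calc q a * log (s a) - q a * log (q a) = q a * (log (s a) - log (q a)) := by ring
        _ ≤ q a * (s a / q a - 1) := mul_le_mul_of_nonneg_left hlog hqa.le
        _ = s a - q a := by field_simp
  have htotal := sum_le_sum fun a (_ : a ∈ univ) => hpt a
  simp only [sum_sub_distrib] at htotal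
  linarith

def marginal13 (p : A × B × C → ℝ) : A × C → ℝ := fun ac => ∑ b, p (ac.1, b, ac.2)

def marginal23 (p : A × B × C → ℝ) : B × C → ℝ := fun bc => ∑ a, p (a, bc.1, bc.2)

def marginal3 (p : A × B × C → ℝ) : C → ℝ := fun c => ∑ a, ∑ b, p (a, b, c)

theorem sum_marginal13_mul (p : A × B × C → ℝ) (f : A × C → ℝ) :
    ∑ ac, marginal13 p ac * f ac = ∑ ω, p ω * f (ω.1, ω.2.2) := by
  simp only [marginal13, Fintype.sum_prod_type, sum_mul]
  refine sum_congr rfl fun a _ => ?_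
  exact sum_comm

theorem sum_marginal23_mul (p : A × B × C → ℝ) (f : B × C → ℝ) :
    ∑ bc, marginal23 p bc * f bc = ∑ ω, p ω * f ω.2 := by
  simp only [marginal23, Fintype.sum_prod_type, sum_mul]
  exact sum_comm_cycle

theorem sum_marginal3_mul (p : A × B × C → ℝ) (f : C → ℝ) :
    ∑ c, marginal3 p c * f c = ∑ ω, p ω * f ω.2.2 := by
  simp only [marginal3, Fintype.sum_prod_type, sum_mul]
  exact sum_comm_cycle.symm

noncomputable def condIndepCoupling (p : A × B × C → ℝ) : A × B × C → ℝ := fun ω =>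
  marginal13 p (ω.1, ω.2.2) * marginal23 p ω.2 / marginal3 p ω.2.2

theorem sum_condIndepCoupling (p : A × B × C → ℝ) :
    ∑ ω, condIndepCoupling p ω = ∑ ω, p ω := calc
  ∑ ω, condIndepCoupling p ω
      = ∑ c, ∑ a, ∑ b, marginal13 p (a, c) * marginal23 p (b, c) / marginal3 p c := by
    simp only [condIndepCoupling, Fintype.sum_prod_type]
    exact sum_comm_cycle
  _ = ∑ c, marginal3 p c := sum_congr rfl fun c _ => by
    have h23 : ∑ b, marginal23 p (b, c) = marginal3 p c := by
      simp only [marginal23, marginal3]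
      exact sum_comm
    simp only [← sum_div, ← sum_mul_sum, h23]
    exact mul_self_div_self _
  _ = ∑ ω, p ω := by
    simp only [marginal3, Fintype.sum_prod_type]
    exact sum_comm_cycle.symm

theorem ent_submodular {p : A × B × C → ℝ} (hp : ∀ ω, 0 ≤ p ω) :
    ent p + ent (marginal3 p) ≤ ent (marginal13 p) + ent (marginal23 p) := by
  have h13 : ∀ ω, p ω ≤ marginal13 p (ω.1, ω.2.2) := fun ω =>
    single_le_sum (f := fun b => p (ω.1, b, ω.2.2)) (fun b _ => hp _) (mem_univ ω.2.1)
  have h23 : ∀ ω, p ω ≤ marginal23 p ω.2 := fun ω =>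
    single_le_sum (f := fun a => p (a, ω.2)) (fun a _ => hp _) (mem_univ ω.1)
  have h3 : ∀ a c, marginal13 p (a, c) ≤ marginal3 p c := fun a c =>
    single_le_sum (f := fun a => marginal13 p (a, c))
      (fun a _ => sum_nonneg fun b _ => hp _) (mem_univ a)
  have hs : ∀ ω, 0 ≤ condIndepCoupling p ω := fun ω =>
    div_nonneg (mul_nonneg ((hp ω).trans (h13 ω)) ((hp ω).trans (h23 ω)))
      ((hp ω).trans ((h13 ω).trans (h3 _ _)))
  have hlog : ∀ ω, p ω * log (condIndepCoupling p ω) = p ω *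
      (log (marginal13 p (ω.1, ω.2.2)) + log (marginal23 p ω.2) - log (marginal3 p ω.2.2)) := by
    intro ω
    rcases (hp ω).eq_or_lt with hω | hω
    · simp [← hω]
    have h13ω := hω.trans_le (h13 ω)
    rw [condIndepCoupling, log_div (mul_pos h13ω (hω.trans_le (h23 ω))).ne'
      (h13ω.trans_le (h3 _ _)).ne', log_mul h13ω.ne' (hω.trans_le (h23 ω)).ne']
  have hsupp : ∀ ω, 0 < p ω → 0 < condIndepCoupling p ω := fun ω hω =>
    have h13ω := hω.trans_le (h13 ω)
    div_pos (mul_pos h13ω (hω.trans_le (h23 ω))) (h13ω.trans_le (h3 _ _))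
  have gibbs := sum_mul_log_le_sum_mul_log hp hs hsupp (sum_condIndepCoupling p).le
  simp only [hlog, mul_sub, mul_add, sum_add_distrib, sum_sub_distrib] at gibbs
  rw [ent_eq_sum_negMulLog, ent_eq_sum_negMulLog, ent_eq_sum_negMulLog, ent_eq_sum_negMulLog,
    ← add_div, ← add_div, div_le_div_iff_of_pos_right (log_pos one_lt_two)]
  simp only [negMulLog, neg_mul, sum_neg_distrib, sum_marginal13_mul, sum_marginal23_mul,
    sum_marginal3_mul]
  linarith

end Entropy

section MarkovChain

variable {X Y : Type} [Fintype X] {μ : X → ℝ} {P : X → X → ℝ} {W : X → Y → ℝ}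

theorem jointX2Y2_eq_jointX1Y1 (hinv : ∀ x', ∑ x, μ x * P x x' = μ x') :
    jointX2Y2 μ P W = jointX1Y1 μ W := by
  funext xy
  simp only [jointX2Y2, jointX1Y1, ← sum_mul, hinv]

theorem marginal3_jointX1X2Y2 (hinv : ∀ x', ∑ x, μ x * P x x' = μ x') :
    marginal3 (jointX1X2Y2 μ P W) = nuDist μ W := by
  funext y
  simp only [marginal3, jointX1X2Y2, nuDist]
  rw [sum_comm]
  simp only [← sum_mul, hinv]

theorem ent_jointX1X2Y2 [Fintype Y] (hinv : ∀ x', ∑ x, μ x * P x x' = μ x')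
    (hW1 : ∀ x, ∑ y, W x y = 1) :
    ent (jointX1X2Y2 μ P W) = ent (jointXX μ P) + ∑ x, μ x * ent (W x) := by
  rw [← ent_comp_equiv (Equiv.prodAssoc X X Y)]
  refine (ent_mul_kernel (jointXX μ P) (fun xx => W xx.2) fun xx => hW1 xx.2).trans ?_
  simp only [jointXX, Fintype.sum_prod_type]
  rw [sum_comm]
  simp only [← sum_mul, hinv]

theorem ent_jointXX_add_ent_nuDist_le [Fintype Y] (hμ0 : ∀ x, 0 ≤ μ x)
    (hP0 : ∀ x x', 0 ≤ P x x') (hinv : ∀ x', ∑ x, μ x * P x x' = μ x')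
    (hW0 : ∀ x y, 0 ≤ W x y) (hW1 : ∀ x, ∑ y, W x y = 1) :
    ent (jointXX μ P) + ent (nuDist μ W) ≤ ent μ + ent (jointX1Y2 μ P W) := by
  have hsub := ent_submodular (p := jointX1X2Y2 μ P W) fun ω =>
    mul_nonneg (mul_nonneg (hμ0 _) (hP0 _ _)) (hW0 _ _)
  change _ ≤ ent (jointX1Y2 μ P W) + ent (jointX2Y2 μ P W) at hsub
  rw [marginal3_jointX1X2Y2 hinv, jointX2Y2_eq_jointX1Y1 hinv, ent_jointX1X2Y2 hinv hW1] at hsub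
  have hX1Y1 : ent (jointX1Y1 μ W) = ent μ + ∑ x, μ x * ent (W x) := ent_mul_kernel μ W hW1
  linarith

end MarkovChain

theorem CL_le_CP_general
    {X Y : Type} [Fintype X] [Fintype Y]
    (μ : X → ℝ) (P : X → X → ℝ) (W : X → Y → ℝ)
    (hμ0 : ∀ x, 0 ≤ μ x)
    (hP0 : ∀ x x', 0 ≤ P x x')
    (hinv : ∀ x', ∑ x, μ x * P x x' = μ x')
    (hW0 : ∀ x y, 0 ≤ W x y) (hW1 : ∀ x, ∑ y, W x y = 1)
    : CL μ P W ≤ CP μ P W := by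
  have key := ent_jointXX_add_ent_nuDist_le hμ0 hP0 hinv hW0 hW1
  simp only [CL, CP, HY2gY1, HY2gX1, IX1X2, IY1Y2]
  linarith

/-- The lumpability cost is bounded above by the predictability cost:
`C_L(X,W) ≤ C_P(X,W)`, i.e., `H(Y_2|Y_1) − H(Y_2|X_1) ≤ I(X_1;X_2) − I(Y_1;Y_2)`. -/
theorem CL_le_CP
    {X Y : Type} [Fintype X] [Fintype Y] [Nonempty X] [Nonempty Y] [DecidableEq X]
    (μ : X → ℝ) (P : X → X → ℝ) (W : X → Y → ℝ)
    (hμ0 : ∀ x, 0 ≤ μ x) (hμ1 : ∑ x, μ x = 1)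
    (hP0 : ∀ x x', 0 ≤ P x x') (hP1 : ∀ x, ∑ x', P x x' = 1)
    (hinv : ∀ x', ∑ x, μ x * P x x' = μ x')
    (hirr : IrreducibleAperiodic (Matrix.of fun a b => P a b))
    (hW0 : ∀ x y, 0 ≤ W x y) (hW1 : ∀ x, ∑ y, W x y = 1)
    : CL μ P W ≤ CP μ P W :=
  CL_le_CP_general μ P W hμ0 hP0 hinv hW0 hW1
end

section
/- For every β ∈ [0,1], the aggregation cost is non-negative: C_β(X,W) = (1−2β)·C_L(X,W) + β·C_P(X,W) ≥ 0. -/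
open Filter Real

lemma aux_log2_pos : (0:ℝ) < Real.log 2 := Real.log_pos (by norm_num)

/-- Pointwise lower bound used in the data-processing inequality. -/
lemma aux_pointwise {t sab pB pAC pC Kbc : ℝ}
    (hsab : 0 ≤ sab) (hK : 0 ≤ Kbc) (ht : t = sab * Kbc)
    (hpB0 : 0 ≤ pB) (hpAC0 : 0 ≤ pAC) (hpC0 : 0 ≤ pC)
    (hsB : sab ≤ pB) (htAC : t ≤ pAC) (htC : t ≤ pC) :
    (t - pAC * (pB * Kbc) / pC) / Real.log 2 ≤
      t * Real.logb 2 sab + t * Real.logb 2 pC - t * Real.logb 2 pB - t * Real.logb 2 pAC := by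
  have hlog2 := aux_log2_pos
  rcases eq_or_lt_of_le (mul_nonneg hsab hK) with h0 | hpos
  · -- t = 0
    have ht0 : t = 0 := by rw [ht, ← h0]
    rw [ht0]
    simp only [zero_mul, sub_zero, add_zero, zero_sub, zero_add]
    have : 0 ≤ pAC * (pB * Kbc) / pC :=
      div_nonneg (mul_nonneg hpAC0 (mul_nonneg hpB0 hK)) hpC0
    apply div_nonpos_of_nonpos_of_nonneg _ hlog2.le
    linarith
  · -- t > 0
    subst ht
    have hs : 0 < sab := by
      rcases mul_pos_iff.mp hpos with ⟨h1, _⟩ | ⟨h1, _⟩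
      · exact h1
      · linarith
    have hKpos : 0 < Kbc := by
      rcases mul_pos_iff.mp hpos with ⟨_, h2⟩ | ⟨_, h2⟩
      · exact h2
      · linarith
    have hpB : 0 < pB := lt_of_lt_of_le hs hsB
    have hpAC : 0 < pAC := lt_of_lt_of_le hpos htAC
    have hpC : 0 < pC := lt_of_lt_of_le hpos htC
    set u : ℝ := sab * pC / (pB * pAC) with hu
    have hupos : 0 < u := by positivity
    have hlogu : 1 - 1 / u ≤ Real.log u := by
      have h := Real.log_le_sub_one_of_pos (x := 1/u) (by positivity)
      rw [Real.log_div one_ne_zero (ne_of_gt hupos), Real.log_one] at h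
      linarith
    have hsplit : Real.log u = Real.log sab + Real.log pC - Real.log pB - Real.log pAC := by
      rw [hu, Real.log_div (by positivity) (by positivity),
        Real.log_mul (ne_of_gt hs) (ne_of_gt hpC), Real.log_mul (ne_of_gt hpB) (ne_of_gt hpAC)]
      ring
    have hrw : sab * Kbc * Real.logb 2 sab + sab * Kbc * Real.logb 2 pC -
        sab * Kbc * Real.logb 2 pB - sab * Kbc * Real.logb 2 pAC
        = sab * Kbc * Real.log u / Real.log 2 := by
      simp only [Real.logb, hsplit]
      ring
    rw [hrw]
    have hstep : sab * Kbc * (1 - 1/u) ≤ sab * Kbc * Real.log u :=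
      mul_le_mul_of_nonneg_left hlogu (le_of_lt hpos)
    have heq : sab * Kbc * (1 - 1/u) = sab * Kbc - pAC * (pB * Kbc) / pC := by
      rw [hu]
      field_simp
    gcongr
    calc sab * Kbc - pAC * (pB * Kbc) / pC = sab * Kbc * (1 - 1/u) := heq.symm
      _ ≤ sab * Kbc * Real.log u := hstep
    

lemma aux_swap3 {A B C : Type} [Fintype A] [Fintype B] [Fintype C] (F : A → B → C → ℝ) :
    (∑ a, ∑ b, ∑ c, F a b c) = ∑ c, ∑ a, ∑ b, F a b c := by
  calc ∑ a, ∑ b, ∑ c, F a b c = ∑ a, ∑ c, ∑ b, F a b c :=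
        Finset.sum_congr rfl fun a _ => Finset.sum_comm
    _ = ∑ c, ∑ a, ∑ b, F a b c := Finset.sum_comm

/-- Data-processing inequality in entropy form: for a joint pmf `s` on `A × B` pushed
through a channel `K : B → C`, we have `H(A,B) + H(C) ≤ H(B) + H(A,C)`. -/
lemma aux_dpi {A B C : Type} [Fintype A] [Fintype B] [Fintype C]
    (s : A → B → ℝ) (K : B → C → ℝ)
    (hs0 : ∀ a b, 0 ≤ s a b) (hs1 : ∑ a, ∑ b, s a b = 1)
    (hK0 : ∀ b c, 0 ≤ K b c) (hK1 : ∀ b, ∑ c, K b c = 1) :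
    ent (fun p : A × B => s p.1 p.2) + ent (fun c => ∑ a, ∑ b, s a b * K b c)
      ≤ ent (fun b => ∑ a, s a b) + ent (fun p : A × C => ∑ b, s p.1 b * K b p.2) := by
  classical
  have hlog2 := aux_log2_pos
  -- expansions of each entropy as a triple sum
  have hAB : ent (fun p : A × B => s p.1 p.2)
      = - ∑ a, ∑ b, ∑ c, s a b * K b c * Real.logb 2 (s a b) := by
    simp only [ent, Fintype.sum_prod_type]
    congr 1
    refine Finset.sum_congr rfl fun a _ => Finset.sum_congr rfl fun b _ => ?_
    rw [← Finset.sum_mul, ← Finset.mul_sum, hK1, mul_one]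
  have hB : ent (fun b => ∑ a, s a b)
      = - ∑ a, ∑ b, ∑ c, s a b * K b c * Real.logb 2 (∑ a', s a' b) := by
    simp only [ent]
    rw [Finset.sum_comm]
    congr 1
    refine Finset.sum_congr rfl fun b _ => ?_
    rw [Finset.sum_mul]
    refine Finset.sum_congr rfl fun a _ => ?_
    rw [← Finset.sum_mul, ← Finset.mul_sum, hK1, mul_one]
  have hC : ent (fun c => ∑ a, ∑ b, s a b * K b c)
      = - ∑ a, ∑ b, ∑ c, s a b * K b c * Real.logb 2 (∑ a', ∑ b', s a' b' * K b' c) := by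
    simp only [ent]
    rw [aux_swap3]
    congr 1
    refine Finset.sum_congr rfl fun c _ => ?_
    rw [Finset.sum_mul]
    refine Finset.sum_congr rfl fun a _ => ?_
    rw [Finset.sum_mul]
  have hAC : ent (fun p : A × C => ∑ b, s p.1 b * K b p.2)
      = - ∑ a, ∑ b, ∑ c, s a b * K b c * Real.logb 2 (∑ b', s a b' * K b' c) := by
    simp only [ent, Fintype.sum_prod_type]
    congr 1
    refine Finset.sum_congr rfl fun a _ => ?_
    rw [Finset.sum_comm]
    refine Finset.sum_congr rfl fun c _ => ?_
    rw [Finset.sum_mul]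
  -- total mass
  have hsum_t : ∑ a, ∑ b, ∑ c, s a b * K b c = 1 := by
    rw [← hs1]
    refine Finset.sum_congr rfl fun a _ => Finset.sum_congr rfl fun b _ => ?_
    rw [← Finset.mul_sum, hK1, mul_one]
  -- the correction-term sum is at most 1
  have hS : ∑ a, ∑ b, ∑ c, (∑ b', s a b' * K b' c) * ((∑ a', s a' b) * K b c)
        / (∑ a', ∑ b', s a' b' * K b' c) ≤ 1 := by
    rw [aux_swap3]
    have hfac : ∀ c, (∑ a, ∑ b, (∑ b', s a b' * K b' c) * ((∑ a', s a' b) * K b c)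
        / (∑ a', ∑ b', s a' b' * K b' c))
        = (∑ a', ∑ b', s a' b' * K b' c) * (∑ a', ∑ b', s a' b' * K b' c)
          / (∑ a', ∑ b', s a' b' * K b' c) := by
      intro c
      have h1 : ∀ a, (∑ b, (∑ b', s a b' * K b' c) * ((∑ a', s a' b) * K b c)
          / (∑ a', ∑ b', s a' b' * K b' c))
          = (∑ b', s a b' * K b' c) * (∑ b, (∑ a', s a' b) * K b c)
            / (∑ a', ∑ b', s a' b' * K b' c) := by
        intro a
        rw [← Finset.sum_div, ← Finset.mul_sum]
      rw [Finset.sum_congr rfl fun a _ => h1 a, ← Finset.sum_div, ← Finset.sum_mul]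
      congr 1
      congr 1
      calc ∑ b, (∑ a', s a' b) * K b c = ∑ b, ∑ a', s a' b * K b c :=
            Finset.sum_congr rfl fun b _ => Finset.sum_mul _ _ _
        _ = ∑ a', ∑ b', s a' b' * K b' c := Finset.sum_comm
    rw [Finset.sum_congr rfl fun c _ => hfac c]
    have hle : ∀ c, (∑ a', ∑ b', s a' b' * K b' c) * (∑ a', ∑ b', s a' b' * K b' c)
          / (∑ a', ∑ b', s a' b' * K b' c) ≤ (∑ a', ∑ b', s a' b' * K b' c) := by
      intro c
      rcases eq_or_ne (∑ a', ∑ b', s a' b' * K b' c) 0 with h | h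
      · rw [h]; simp
      · rw [mul_div_assoc, div_self h, mul_one]
    calc ∑ c, (∑ a', ∑ b', s a' b' * K b' c) * (∑ a', ∑ b', s a' b' * K b' c)
          / (∑ a', ∑ b', s a' b' * K b' c)
        ≤ ∑ c, ∑ a', ∑ b', s a' b' * K b' c := Finset.sum_le_sum fun c _ => hle c
      _ = 1 := by rw [← aux_swap3]; exact hsum_t
  -- pointwise bound summed up
  have key : 0 ≤ ∑ a, ∑ b, ∑ c,
      (s a b * K b c * Real.logb 2 (s a b)
        + s a b * K b c * Real.logb 2 (∑ a', ∑ b', s a' b' * K b' c)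
        - s a b * K b c * Real.logb 2 (∑ a', s a' b)
        - s a b * K b c * Real.logb 2 (∑ b', s a b' * K b' c)) := by
    have hLB : ∀ a b c,
        (s a b * K b c - (∑ b', s a b' * K b' c) * ((∑ a', s a' b) * K b c)
          / (∑ a', ∑ b', s a' b' * K b' c)) / Real.log 2
        ≤ s a b * K b c * Real.logb 2 (s a b)
          + s a b * K b c * Real.logb 2 (∑ a', ∑ b', s a' b' * K b' c)
          - s a b * K b c * Real.logb 2 (∑ a', s a' b)
          - s a b * K b c * Real.logb 2 (∑ b', s a b' * K b' c) := by
      intro a b c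
      have hpB0 : (0:ℝ) ≤ ∑ a', s a' b := Finset.sum_nonneg fun i _ => hs0 i b
      have hpAC0 : (0:ℝ) ≤ ∑ b', s a b' * K b' c :=
        Finset.sum_nonneg fun i _ => mul_nonneg (hs0 a i) (hK0 i c)
      have hpC0 : (0:ℝ) ≤ ∑ a', ∑ b', s a' b' * K b' c :=
        Finset.sum_nonneg fun i _ =>
          Finset.sum_nonneg fun j _ => mul_nonneg (hs0 i j) (hK0 j c)
      have hsB : s a b ≤ ∑ a', s a' b :=
        Finset.single_le_sum (fun i _ => hs0 i b) (Finset.mem_univ a)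
      have htAC : s a b * K b c ≤ ∑ b', s a b' * K b' c :=
        Finset.single_le_sum (fun i (_ : i ∈ Finset.univ) => mul_nonneg (hs0 a i) (hK0 i c)) (Finset.mem_univ b)
      have htC : s a b * K b c ≤ ∑ a', ∑ b', s a' b' * K b' c :=
        le_trans htAC (Finset.single_le_sum
          (fun i (_ : i ∈ Finset.univ) => Finset.sum_nonneg fun j _ => mul_nonneg (hs0 i j) (hK0 j c))
          (Finset.mem_univ a))
      exact aux_pointwise (hs0 a b) (hK0 b c) rfl hpB0 hpAC0 hpC0 hsB htAC htC
    have hstep : ∑ a, ∑ b, ∑ c,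
        (s a b * K b c - (∑ b', s a b' * K b' c) * ((∑ a', s a' b) * K b c)
          / (∑ a', ∑ b', s a' b' * K b' c)) / Real.log 2
        ≤ ∑ a, ∑ b, ∑ c,
          (s a b * K b c * Real.logb 2 (s a b)
            + s a b * K b c * Real.logb 2 (∑ a', ∑ b', s a' b' * K b' c)
            - s a b * K b c * Real.logb 2 (∑ a', s a' b)
            - s a b * K b c * Real.logb 2 (∑ b', s a b' * K b' c)) :=
      Finset.sum_le_sum fun a _ => Finset.sum_le_sum fun b _ =>
        Finset.sum_le_sum fun c _ => hLB a b c
    refine le_trans ?_ hstep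
    have hsplit : ∑ a, ∑ b, ∑ c,
        (s a b * K b c - (∑ b', s a b' * K b' c) * ((∑ a', s a' b) * K b c)
          / (∑ a', ∑ b', s a' b' * K b' c)) / Real.log 2
        = ((∑ a, ∑ b, ∑ c, s a b * K b c)
          - ∑ a, ∑ b, ∑ c, (∑ b', s a b' * K b' c) * ((∑ a', s a' b) * K b c)
            / (∑ a', ∑ b', s a' b' * K b' c)) / Real.log 2 := by
      simp only [sub_div, Finset.sum_sub_distrib, ← Finset.sum_div]
    rw [hsplit, hsum_t]
    apply div_nonneg _ hlog2.le
    linarith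
  rw [hAB, hB, hC, hAC]
  have hexp : ∑ a, ∑ b, ∑ c,
      (s a b * K b c * Real.logb 2 (s a b)
        + s a b * K b c * Real.logb 2 (∑ a', ∑ b', s a' b' * K b' c)
        - s a b * K b c * Real.logb 2 (∑ a', s a' b)
        - s a b * K b c * Real.logb 2 (∑ b', s a b' * K b' c))
      = (∑ a, ∑ b, ∑ c, s a b * K b c * Real.logb 2 (s a b))
        + (∑ a, ∑ b, ∑ c, s a b * K b c * Real.logb 2 (∑ a', ∑ b', s a' b' * K b' c))
        - (∑ a, ∑ b, ∑ c, s a b * K b c * Real.logb 2 (∑ a', s a' b))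
        - (∑ a, ∑ b, ∑ c, s a b * K b c * Real.logb 2 (∑ b', s a b' * K b' c)) := by
    simp only [Finset.sum_sub_distrib, Finset.sum_add_distrib]
  rw [hexp] at key
  linarith

lemma aux_ent_swap {A B : Type} [Fintype A] [Fintype B] (f : A × B → ℝ) :
    ent (fun p : B × A => f (p.2, p.1)) = ent f := by
  unfold ent
  congr 1
  exact Fintype.sum_equiv (Equiv.prodComm B A) _ _ (fun p => rfl)

/-- For every `β ∈ [0,1]`, the aggregation cost is non-negative:
`C_β(X,W) = (1−2β)·C_L(X,W) + β·C_P(X,W) ≥ 0`. -/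
theorem Cbeta_nonneg
    {X Y : Type} [Fintype X] [Fintype Y] [Nonempty X] [Nonempty Y] [DecidableEq X]
    (μ : X → ℝ) (P : X → X → ℝ) (W : X → Y → ℝ)
    (hμ0 : ∀ x, 0 ≤ μ x) (hμ1 : ∑ x, μ x = 1)
    (hP0 : ∀ x x', 0 ≤ P x x') (hP1 : ∀ x, ∑ x', P x x' = 1)
    (hinv : ∀ x', ∑ x, μ x * P x x' = μ x')
    (hirr : IrreducibleAperiodic (Matrix.of fun a b => P a b))
    (hW0 : ∀ x y, 0 ≤ W x y) (hW1 : ∀ x, ∑ y, W x y = 1)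
    : ∀ β : ℝ, 0 ≤ β → β ≤ 1 → 0 ≤ Cbeta μ P W β := by
  intro b hb0 hb1
  -- Application 1 of DPI: X1 - X2 - Y2  gives  I(X1;Y2) ≤ I(X1;X2)
  have hs1b : ∑ a, ∑ x', μ a * P a x' = 1 := by
    rw [← hμ1]
    refine Finset.sum_congr rfl fun a _ => ?_
    rw [← Finset.mul_sum, hP1, mul_one]
  have hXX : ent (jointXX μ P) + ent (nuDist μ W)
      ≤ ent μ + ent (jointX1Y2 μ P W) := by
    have h := aux_dpi (fun a b => μ a * P a b) W
      (fun a b => mul_nonneg (hμ0 a) (hP0 a b)) hs1b hW0 hW1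
    have e2 : (fun c => ∑ a, ∑ b, μ a * P a b * W b c) = nuDist μ W := by
      funext c
      rw [Finset.sum_comm]
      refine Finset.sum_congr rfl fun b _ => ?_
      rw [← Finset.sum_mul, hinv]
    have e3 : (fun b => ∑ a, μ a * P a b) = μ := funext hinv
    rw [e2, e3] at h
    exact h
  -- Application 2 of DPI: Y1 - X1 - Y2  gives  I(Y1;Y2) ≤ I(X1;Y2)
  have hrowsum : ∀ x, (∑ y : Y, ∑ x2, μ x * P x x2 * W x2 y) = μ x := by
    intro x
    rw [Finset.sum_comm]
    calc ∑ x2, ∑ y, μ x * P x x2 * W x2 y = ∑ x2, μ x * P x x2 := by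
          refine Finset.sum_congr rfl fun x2 _ => ?_
          rw [← Finset.mul_sum, hW1, mul_one]
      _ = μ x := by rw [← Finset.mul_sum, hP1, mul_one]
  have hYY : ent (jointX1Y2 μ P W) + ent (nuDist μ W)
      ≤ ent μ + ent (jointYY μ P W) := by
    have h := aux_dpi (fun (y : Y) (x : X) => ∑ x2, μ x * P x x2 * W x2 y) W
      (fun y x => Finset.sum_nonneg fun x2 _ =>
        mul_nonneg (mul_nonneg (hμ0 x) (hP0 x x2)) (hW0 x2 y))
      (by rw [Finset.sum_comm]
          rw [Finset.sum_congr rfl fun x (_ : x ∈ Finset.univ) => hrowsum x]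
          exact hμ1)
      hW0 hW1
    have f1 : ent (fun p : Y × X => ∑ x2, μ p.2 * P p.2 x2 * W x2 p.1)
        = ent (jointX1Y2 μ P W) := aux_ent_swap (jointX1Y2 μ P W)
    have f3 : (fun x : X => ∑ y : Y, ∑ x2, μ x * P x x2 * W x2 y) = μ := funext hrowsum
    have f2 : (fun c => ∑ a : Y, ∑ b : X, (∑ x2, μ b * P b x2 * W x2 a) * W b c)
        = nuDist μ W := by
      funext c
      rw [Finset.sum_comm]
      refine Finset.sum_congr rfl fun x _ => ?_
      rw [← Finset.sum_mul, hrowsum]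
    have f4 : ent (fun p : Y × Y => ∑ b : X, (∑ x2, μ b * P b x2 * W x2 p.1) * W b p.2)
        = ent (jointYY μ P W) := by
      have : (fun p : Y × Y => ∑ b : X, (∑ x2, μ b * P b x2 * W x2 p.1) * W b p.2)
          = fun p : Y × Y => jointYY μ P W (p.2, p.1) := by
        funext p
        unfold jointYY
        refine Finset.sum_congr rfl fun x _ => ?_
        rw [Finset.sum_mul]
        refine Finset.sum_congr rfl fun x2 _ => ?_
        ring
      rw [this]
      exact aux_ent_swap (jointYY μ P W)
    rw [f1, f2, f3, f4] at h
    exact h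
  have hCL : 0 ≤ CL μ P W := by
    unfold CL HY2gY1 HY2gX1
    linarith
  have hDiff : 0 ≤ CP μ P W - CL μ P W := by
    unfold CP CL IX1X2 IY1Y2 HY2gY1 HY2gX1
    linarith
  unfold Cbeta
  nlinarith [mul_nonneg (by linarith : (0:ℝ) ≤ 1 - b) hCL, mul_nonneg hb0 hDiff]
end

section
/- At β = 1 the aggregation cost equals a conditional mutual information: C_1(X,W) = C_P(X,W) − C_L(X,W) = I(X_1; X_2 | Y_2). -/
open Filter Real

lemma mll (a b : ℝ) (ha : 0 ≤ a) (hb : 0 ≤ b) :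
    a * b * Real.logb 2 (a * b) = a * b * Real.logb 2 a + a * b * Real.logb 2 b := by
  rcases ha.eq_or_lt with h | h
  · simp [← h]
  rcases hb.eq_or_lt with h' | h'
  · simp [← h']
  rw [Real.logb_mul h.ne' h'.ne']; ring

lemma inner_split {Y : Type} [Fintype Y] (a : ℝ) (W : Y → ℝ) (ha : 0 ≤ a)
    (hW0 : ∀ y, 0 ≤ W y) (hW1 : ∑ y, W y = 1) :
    ∑ y, a * W y * Real.logb 2 (a * W y)
      = a * Real.logb 2 a + ∑ y, a * W y * Real.logb 2 (W y) := by
  calc ∑ y, a * W y * Real.logb 2 (a * W y)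
      = ∑ y, (a * W y * Real.logb 2 a + a * W y * Real.logb 2 (W y)) :=
        Finset.sum_congr rfl fun y _ => mll a (W y) ha (hW0 y)
    _ = (∑ y, W y) * (a * Real.logb 2 a) + ∑ y, a * W y * Real.logb 2 (W y) := by
        rw [Finset.sum_add_distrib, Finset.sum_mul]
        congr 1
        exact Finset.sum_congr rfl fun y _ => by ring
    _ = a * Real.logb 2 a + ∑ y, a * W y * Real.logb 2 (W y) := by rw [hW1]; ring

/-- At `β = 1` the aggregation cost equals a conditional mutual
information: `C_1(X,W) = C_P(X,W) − C_L(X,W) = I(X_1; X_2 | Y_2)`. -/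
theorem C_one_eq_condMutInf
    {X Y : Type} [Fintype X] [Fintype Y] [Nonempty X] [Nonempty Y] [DecidableEq X]
    (μ : X → ℝ) (P : X → X → ℝ) (W : X → Y → ℝ)
    (hμ0 : ∀ x, 0 ≤ μ x) (hμ1 : ∑ x, μ x = 1)
    (hP0 : ∀ x x', 0 ≤ P x x') (hP1 : ∀ x, ∑ x', P x x' = 1)
    (hinv : ∀ x', ∑ x, μ x * P x x' = μ x')
    (hirr : IrreducibleAperiodic (Matrix.of fun a b => P a b))
    (hW0 : ∀ x y, 0 ≤ W x y) (hW1 : ∀ x, ∑ y, W x y = 1)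
    : Cbeta μ P W 1 = CP μ P W - CL μ P W ∧
      CP μ P W - CL μ P W = IX1X2gY2 μ P W := by
  constructor
  · unfold Cbeta; ring
  · set D : ℝ := ∑ x, ∑ y, μ x * W x y * Real.logb 2 (W x y) with hD
    have h1 : jointX2Y2 μ P W = fun p : X × Y => μ p.1 * W p.1 p.2 := by
      funext p
      show (∑ x, μ x * P x p.1 * W p.1 p.2) = μ p.1 * W p.1 p.2
      rw [show (∑ x, μ x * P x p.1 * W p.1 p.2) = (∑ x, μ x * P x p.1) * W p.1 p.2 from
        (Finset.sum_mul _ _ _).symm, hinv]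
    have h2 : ent (fun p : X × Y => μ p.1 * W p.1 p.2) = ent μ - D := by
      unfold ent
      rw [Fintype.sum_prod_type]
      rw [Finset.sum_congr rfl fun x _ => inner_split (μ x) (W x) (hμ0 x) (hW0 x) (hW1 x)]
      rw [Finset.sum_add_distrib]
      ring
    have h3 : ent (jointX1X2Y2 μ P W) = ent (jointXX μ P) - D := by
      unfold ent jointX1X2Y2 jointXX
      simp only [Fintype.sum_prod_type]
      have step : ∀ x1 x2 : X, ∑ y, μ x1 * P x1 x2 * W x2 y * Real.logb 2 (μ x1 * P x1 x2 * W x2 y)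
          = μ x1 * P x1 x2 * Real.logb 2 (μ x1 * P x1 x2)
            + ∑ y, μ x1 * P x1 x2 * W x2 y * Real.logb 2 (W x2 y) := by
        intro x1 x2
        exact inner_split (μ x1 * P x1 x2) (W x2)
          (mul_nonneg (hμ0 x1) (hP0 x1 x2)) (hW0 x2) (hW1 x2)
      rw [Finset.sum_congr rfl fun x1 _ => Finset.sum_congr rfl fun x2 _ => step x1 x2]
      have h4 : ∑ x1 : X, ∑ x2 : X, ∑ y, μ x1 * P x1 x2 * W x2 y * Real.logb 2 (W x2 y) = D := by
        rw [Finset.sum_comm]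
        refine Finset.sum_congr rfl fun x2 _ => ?_
        rw [Finset.sum_comm]
        refine Finset.sum_congr rfl fun y _ => ?_
        calc ∑ x1, μ x1 * P x1 x2 * W x2 y * Real.logb 2 (W x2 y)
            = (∑ x1, μ x1 * P x1 x2) * (W x2 y * Real.logb 2 (W x2 y)) := by
              rw [Finset.sum_mul]
              exact Finset.sum_congr rfl fun x1 _ => by ring
          _ = μ x2 * W x2 y * Real.logb 2 (W x2 y) := by rw [hinv]; ring
      simp only [Finset.sum_add_distrib, h4]
      ring
    unfold CP CL IX1X2 IY1Y2 HY2gY1 HY2gX1 IX1X2gY2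
    rw [h1, h2, h3]
    ring
end

section
/- For every β with 0 ≤ β ≤ 1/2, the chain of inequalities β·C_P(X,W) ≤ δ_β(X,W) ≤ C_β(X,W) holds. -/
open Filter Real

/-!
The increments `H(Y_1, …, Y_{n+2}) − H(Y_1, …, Y_{n+1}) = H(Y_{n+2} | Y_1, …, Y_{n+1})` converge
to `H̄(Y)`. Conditioning on less information can only increase entropy, so each increment is at
most `H(Y_{n+2} | Y_{n+1})` and at least `H(Y_{n+2} | X_{n+1}, Y_1, …, Y_{n+1})`. Given `X_{n+1}`,
the next observation `Y_{n+2}` is independent of the past observations, so the latter equals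
`H(Y_{n+2} | X_{n+1})`; by stationarity the two bounds are `H(Y_2|Y_1)` and `H(Y_2|X_1)`. Finally
`δ_β − β·C_P = (1−2β)(H(Y_2|Y_1) − H̄(Y))` and `C_β − δ_β = (1−2β)(H̄(Y) − H(Y_2|X_1))`, both
nonnegative when `β ≤ 1/2`.
-/

open Finset

section Pushforward

variable {α β γ : Type} [Fintype α] [Fintype γ]

noncomputable def pushforward [DecidableEq β] (f : α → β) (p : α → ℝ) (b : β) : ℝ :=
  ∑ a with f a = b, p a

variable [DecidableEq β]

lemma pushforward_nonneg {p : α → ℝ} (hp : ∀ a, 0 ≤ p a) (f : α → β) (b : β) :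
    0 ≤ pushforward f p b :=
  sum_nonneg fun a _ => hp a

lemma le_pushforward_apply {p : α → ℝ} (hp : ∀ a, 0 ≤ p a) (f : α → β) (a : α) :
    p a ≤ pushforward f p (f a) :=
  single_le_sum (fun a _ => hp a) (by simp)

lemma pushforward_pos {p : α → ℝ} (hp : ∀ a, 0 ≤ p a) (f : α → β) {a : α}
    (ha : p a ≠ 0) : 0 < pushforward f p (f a) :=
  ((hp a).lt_of_ne' ha).trans_le (le_pushforward_apply hp f a)

lemma pushforward_eq_sum_mul_indicator (f : α → β) (p : α → ℝ) (b : β) :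
    pushforward f p b = ∑ a, p a * if f a = b then 1 else 0 := by
  simp [pushforward, sum_filter]

lemma sum_filter_mul_comp (f : α → β) (p : α → ℝ) (F : β → ℝ) (b : β) :
    ∑ a with f a = b, p a * F (f a) = pushforward f p b * F b := by
  rw [pushforward, sum_mul]
  exact sum_congr rfl fun a ha => by rw [(mem_filter.1 ha).2]

variable [Fintype β]

lemma sum_pushforward (f : α → β) (p : α → ℝ) : ∑ b, pushforward f p b = ∑ a, p a :=
  sum_fiberwise _ _ _

lemma sum_mul_comp_eq_sum_pushforward_mul (f : α → β) (p : α → ℝ) (F : β → ℝ) :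
    ∑ a, p a * F (f a) = ∑ b, pushforward f p b * F b := by
  rw [← sum_fiberwise univ f]
  exact sum_congr rfl fun b _ => sum_filter_mul_comp f p F b

lemma pushforward_pushforward {δ : Type} [DecidableEq δ] (f : α → β) (g : β → δ)
    (p : α → ℝ) : pushforward g (pushforward f p) = pushforward (g ∘ f) p := by
  funext d
  rw [pushforward_eq_sum_mul_indicator, ← sum_mul_comp_eq_sum_pushforward_mul,
    pushforward_eq_sum_mul_indicator]
  rfl

end Pushforward

section Marginals

variable {α β γ : Type} [Fintype α] [Fintype γ]

lemma pushforward_fst_apply [DecidableEq α] (p : α × γ → ℝ) (a : α) :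
    pushforward Prod.fst p a = ∑ c, p (a, c) := by
  simp [pushforward_eq_sum_mul_indicator, Fintype.sum_prod_type_right]

lemma pushforward_snd_apply [DecidableEq γ] (p : α × γ → ℝ) (c : γ) :
    pushforward Prod.snd p c = ∑ a, p (a, c) := by
  simp [pushforward_eq_sum_mul_indicator, Fintype.sum_prod_type]

lemma pushforward_prodMap_id_apply [DecidableEq β] [DecidableEq γ] (f : α → β)
    (p : α × γ → ℝ) (b : β) (c : γ) :
    pushforward (Prod.map f id) p (b, c) = ∑ a with f a = b, p (a, c) := by
  simp [pushforward_eq_sum_mul_indicator, Fintype.sum_prod_type, sum_filter, ite_and]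

lemma pushforward_prodMap_mul_apply {δ : Type} [DecidableEq β] [DecidableEq δ] (f : α → β)
    (g : γ → δ) (A : α → ℝ) (K : α → γ → ℝ) (b : β) (d : δ) :
    pushforward (Prod.map f g) (fun z => A z.1 * K z.1 z.2) (b, d)
      = ∑ a with f a = b, A a * pushforward g (K a) d := by
  simp only [pushforward, sum_filter, Fintype.sum_prod_type, Prod.map, Prod.mk.injEq, ite_and]
  refine sum_congr rfl fun a _ => ?_
  split_ifs <;> simp [mul_sum]

lemma pushforward_prodMap_mul_kernel [DecidableEq β] [DecidableEq γ] (k : α → β)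
    (A : α → ℝ) (K : β → γ → ℝ) :
    pushforward (Prod.map k id) (fun z => A z.1 * K (k z.1) z.2)
      = fun w => pushforward k A w.1 * K w.1 w.2 := by
  funext ⟨b, c⟩
  rw [pushforward_prodMap_id_apply]
  exact sum_filter_mul_comp k A (K · c) b

lemma pushforward_fst_pushforward_prodMap [Fintype β] [DecidableEq β] [DecidableEq γ]
    (f : α → β) (p : α × γ → ℝ) :
    pushforward Prod.fst (pushforward (Prod.map f id) p) = pushforward (f ∘ Prod.fst) p := by
  rw [pushforward_pushforward, Prod.map_fst']

lemma pushforward_fst_mul_kernel [DecidableEq α] (A : α → ℝ) (K : α → γ → ℝ)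
    (hK : ∀ a, ∑ c, K a c = 1) :
    pushforward Prod.fst (fun z => A z.1 * K z.1 z.2) = A := by
  funext a
  rw [pushforward_fst_apply]
  simp [← mul_sum, hK]

end Marginals

section Entropy

variable {α β γ : Type} [Fintype α] [Fintype β] [Fintype γ]

lemma ent_comp_equiv_s14 (e : α ≃ β) (p : β → ℝ) : ent (p ∘ e) = ent p := by
  simp only [ent, Function.comp_apply]
  rw [e.sum_comp fun b => p b * Real.logb 2 (p b)]

lemma mul_logb_sub_mul_logb_le {x y : ℝ} (hx : 0 ≤ x) (hy : 0 ≤ y)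
    (hxy : x ≠ 0 → y ≠ 0) :
    x * Real.logb 2 y - x * Real.logb 2 x ≤ (y - x) / Real.log 2 := by
  rcases hx.eq_or_lt with rfl | hx
  · simpa using div_nonneg hy (Real.log_nonneg one_le_two)
  have hy : 0 < y := hy.lt_of_ne' (hxy hx.ne')
  rw [← mul_sub, ← Real.logb_div hy.ne' hx.ne', Real.logb, ← mul_div_assoc]
  gcongr
  calc x * Real.log (y / x) ≤ x * (y / x - 1) :=
        mul_le_mul_of_nonneg_left (Real.log_le_sub_one_of_pos (div_pos hy hx)) hx.le
    _ = y - x := by field_simp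

/-- Gibbs' inequality. -/
theorem ent_le_neg_sum_mul_logb {p q : α → ℝ} (hp : ∀ a, 0 ≤ p a) (hq : ∀ a, 0 ≤ q a)
    (hpq : ∀ a, p a ≠ 0 → q a ≠ 0) (hsum : ∑ a, q a ≤ ∑ a, p a) :
    ent p ≤ -∑ a, p a * Real.logb 2 (q a) := by
  have hterms := sum_le_sum fun a (_ : a ∈ univ) =>
    mul_logb_sub_mul_logb_le (hp a) (hq a) (hpq a)
  rw [sum_sub_distrib, ← sum_div, sum_sub_distrib] at hterms
  have : (∑ a, q a - ∑ a, p a) / Real.log 2 ≤ 0 :=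
    div_nonpos_of_nonpos_of_nonneg (by linarith) (Real.log_nonneg one_le_two)
  rw [ent]
  linarith

lemma mul_mul_logb_mul (b x y : ℝ) :
    x * y * Real.logb b (x * y) = y * (x * Real.logb b x) + x * (y * Real.logb b y) := by
  rcases eq_or_ne x 0 with rfl | hx
  · simp
  rcases eq_or_ne y 0 with rfl | hy
  · simp
  rw [Real.logb_mul hx hy]
  ring

/-- `H(C | A)` for the joint law `p` of `(A, C)`. -/
noncomputable def condEnt [DecidableEq α] (p : α × γ → ℝ) : ℝ :=
  ent p - ent (pushforward Prod.fst p)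

variable [DecidableEq α]

lemma condEnt_mul_kernel (A : α → ℝ) (K : α → γ → ℝ) (hK : ∀ a, ∑ c, K a c = 1) :
    condEnt (fun z => A z.1 * K z.1 z.2) = ∑ a, A a * ent (K a) := by
  rw [condEnt, pushforward_fst_mul_kernel A K hK]
  simp only [ent, Fintype.sum_prod_type, mul_mul_logb_mul, sum_add_distrib, ← sum_mul,
    ← mul_sum, hK, one_mul, mul_neg, sum_neg_distrib]
  ring

lemma condEnt_mul_kernel_comp [DecidableEq β] [DecidableEq γ] (k : α → β) (A : α → ℝ)
    (K : β → γ → ℝ) (hK : ∀ b, ∑ c, K b c = 1) :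
    condEnt (fun z => A z.1 * K (k z.1) z.2)
      = condEnt (pushforward (Prod.map k id) fun z => A z.1 * K (k z.1) z.2) := by
  rw [pushforward_prodMap_mul_kernel, condEnt_mul_kernel _ (fun a => K (k a)) (fun a => hK _),
    condEnt_mul_kernel _ K hK]
  exact sum_mul_comp_eq_sum_pushforward_mul k A fun b => ent (K b)

end Entropy

section Conditioning

variable {α β γ : Type} [Fintype α] [Fintype γ]
  [DecidableEq α] [DecidableEq β] [DecidableEq γ]

/-- The law of `(A, C)` that keeps the laws of `A` and of `(f A, C)` of `p` but makes `A` and `C`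
conditionally independent given `f A`. -/
noncomputable def condIndepLaw (f : α → β) (p : α × γ → ℝ) (z : α × γ) : ℝ :=
  pushforward Prod.fst p z.1 * pushforward (Prod.map f id) p (f z.1, z.2)
    / pushforward (f ∘ Prod.fst) p (f z.1)

variable {p : α × γ → ℝ} (f : α → β)

lemma condIndepLaw_nonneg (hp : ∀ z, 0 ≤ p z) (z : α × γ) : 0 ≤ condIndepLaw f p z :=
  div_nonneg (mul_nonneg (pushforward_nonneg hp _ _) (pushforward_nonneg hp _ _))
    (pushforward_nonneg hp _ _)

lemma condIndepLaw_ne_zero (hp : ∀ z, 0 ≤ p z) {z : α × γ} (hz : p z ≠ 0) :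
    condIndepLaw f p z ≠ 0 :=
  (div_pos (mul_pos (pushforward_pos hp Prod.fst hz) (pushforward_pos hp (Prod.map f id) hz))
    (pushforward_pos hp (f ∘ Prod.fst) hz)).ne'

lemma sum_condIndepLaw_le [Fintype β] (hp : ∀ z, 0 ≤ p z) :
    ∑ z, condIndepLaw f p z ≤ ∑ z, p z := by
  have hrow : ∀ a, ∑ c, condIndepLaw f p (a, c) = pushforward Prod.fst p a
      * (pushforward (f ∘ Prod.fst) p (f a) / pushforward (f ∘ Prod.fst) p (f a)) := fun a => by
    simp only [condIndepLaw, ← sum_div, ← mul_sum, ← pushforward_fst_apply,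
      pushforward_fst_pushforward_prodMap, mul_div_assoc]
  rw [Fintype.sum_prod_type, ← sum_pushforward Prod.fst p]
  simp only [hrow]
  exact sum_le_sum fun a _ =>
    mul_le_of_le_one_right (pushforward_nonneg hp _ _) (div_self_le_one _)

lemma neg_sum_mul_logb_condIndepLaw [Fintype β] (hp : ∀ z, 0 ≤ p z) :
    -∑ z, p z * Real.logb 2 (condIndepLaw f p z) = ent (pushforward Prod.fst p)
      + ent (pushforward (Prod.map f id) p) - ent (pushforward (f ∘ Prod.fst) p) := by
  set pA := pushforward Prod.fst p
  set pBC := pushforward (Prod.map f id) p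
  set pB := pushforward (f ∘ Prod.fst) p
  have hlog : ∀ z, p z * Real.logb 2 (condIndepLaw f p z) = p z * Real.logb 2 (pA z.1)
      + p z * Real.logb 2 (pBC (f z.1, z.2)) - p z * Real.logb 2 (pB (f z.1)) := by
    intro z
    rcases eq_or_ne (p z) 0 with hz | hz
    · simp [hz]
    have h1 : 0 < pA z.1 := pushforward_pos hp Prod.fst hz
    have h2 : 0 < pBC (f z.1, z.2) := pushforward_pos hp (Prod.map f id) hz
    have h3 : 0 < pB (f z.1) := pushforward_pos hp (f ∘ Prod.fst) hz
    rw [condIndepLaw, Real.logb_div (mul_pos h1 h2).ne' h3.ne', Real.logb_mul h1.ne' h2.ne']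
    ring
  have hA : ∑ z, p z * Real.logb 2 (pA z.1) = ∑ a, pA a * Real.logb 2 (pA a) :=
    sum_mul_comp_eq_sum_pushforward_mul Prod.fst p fun a => Real.logb 2 (pA a)
  have hBC : ∑ z, p z * Real.logb 2 (pBC (f z.1, z.2)) = ∑ w, pBC w * Real.logb 2 (pBC w) :=
    sum_mul_comp_eq_sum_pushforward_mul (Prod.map f id) p fun w => Real.logb 2 (pBC w)
  have hB : ∑ z, p z * Real.logb 2 (pB (f z.1)) = ∑ b, pB b * Real.logb 2 (pB b) :=
    sum_mul_comp_eq_sum_pushforward_mul (f ∘ Prod.fst) p fun b => Real.logb 2 (pB b)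
  simp only [hlog, sum_add_distrib, sum_sub_distrib, hA, hBC, hB, ent]
  ring

theorem condEnt_le_condEnt_pushforward [Fintype β] (hp : ∀ z, 0 ≤ p z) :
    condEnt p ≤ condEnt (pushforward (Prod.map f id) p) := by
  have := ent_le_neg_sum_mul_logb hp (condIndepLaw_nonneg f hp)
    (fun _ => condIndepLaw_ne_zero f hp) (sum_condIndepLaw_le f hp)
  rw [neg_sum_mul_logb_condIndepLaw f hp] at this
  rw [condEnt, condEnt, pushforward_fst_pushforward_prodMap]
  linarith

end Conditioning

section HiddenMarkov

variable {X Y : Type} (μ : X → ℝ) (P : X → X → ℝ) (W : X → Y → ℝ)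

lemma sum_pi_fin_succ_snoc [Fintype X] {n : ℕ} (F : (Fin (n + 1) → X) → ℝ) :
    ∑ xs, F xs = ∑ xs : Fin n → X, ∑ x, F (Fin.snoc xs x) := by
  rw [← (Fin.snocEquiv fun _ => X).sum_comp, Fintype.sum_prod_type_right]
  rfl

lemma chainJoint_snoc (n : ℕ) (xs : Fin (n + 1) → X) (x : X) :
    chainJoint μ P (n + 1) (Fin.snoc xs x) = chainJoint μ P n xs * P (xs (Fin.last n)) x := by
  simp only [chainJoint, Fin.prod_univ_castSucc, Fin.succ_castSucc, Fin.snoc_castSucc,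
    Fin.succ_last, Fin.snoc_last]
  rw [show (0 : Fin (n + 2)) = Fin.castSucc 0 from rfl, Fin.snoc_castSucc, mul_assoc]

lemma prod_channel_snoc {k : ℕ} (xs : Fin (k + 1) → X) (ys : Fin k → Y) (y : Y) :
    ∏ i, W (xs i) ((Fin.snoc ys y : Fin (k + 1) → Y) i)
      = (∏ i : Fin k, W (xs i.castSucc) (ys i)) * W (xs (Fin.last k)) y := by
  simp [Fin.prod_univ_castSucc]

lemma sum_prod_channel [Fintype Y] (hW1 : ∀ x, ∑ y, W x y = 1) {k : ℕ} (xs : Fin k → X) :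
    ∑ ys : Fin k → Y, ∏ i, W (xs i) (ys i) = 1 := by
  simp [← Fintype.prod_sum, hW1]

lemma pushforward_last_prod_channel [Fintype Y] [DecidableEq Y] (hW1 : ∀ x, ∑ y, W x y = 1)
    {k : ℕ} (xs : Fin (k + 1) → X) :
    pushforward (fun ys : Fin (k + 1) → Y => ys (Fin.last k)) (fun ys => ∏ i, W (xs i) (ys i))
      = W (xs (Fin.last k)) := by
  funext b
  rw [pushforward_eq_sum_mul_indicator, sum_pi_fin_succ_snoc]
  simp [prod_channel_snoc, ← sum_mul, sum_prod_channel W hW1]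

theorem pushforward_last_chainJoint [Fintype X] [DecidableEq X]
    (hinv : ∀ x', ∑ x, μ x * P x x' = μ x') (n : ℕ) :
    pushforward (fun xs : Fin (n + 1) → X => xs (Fin.last n)) (chainJoint μ P n) = μ := by
  induction n with
  | zero =>
    funext x
    rw [pushforward_eq_sum_mul_indicator, ← (Equiv.funUnique (Fin 1) X).symm.sum_comp]
    simp [chainJoint]
  | succ n ih =>
    funext x
    rw [pushforward_eq_sum_mul_indicator, sum_pi_fin_succ_snoc]
    simp only [chainJoint_snoc, Fin.snoc_last, mul_ite, mul_one, mul_zero, sum_ite_eq',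
      mem_univ, if_true]
    rw [sum_mul_comp_eq_sum_pushforward_mul (fun xs : Fin (n + 1) → X => xs (Fin.last n))
      (chainJoint μ P n) (P · x), ih, hinv]

end HiddenMarkov

section HiddenMarkovJoint

variable {X Y : Type} [Fintype X] (μ : X → ℝ) (P : X → X → ℝ) (W : X → Y → ℝ)

noncomputable def hmmJoint (n : ℕ) : (Fin (n + 1) → X) × (Fin (n + 1) → Y) → ℝ :=
  fun z => chainJoint μ P n z.1 * ∏ i, W (z.1 i) (z.2 i)

/-- The law of `(X_{n+1}, (Y_1, …, Y_{n+1}))`. -/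
noncomputable def stateObsJoint [Fintype Y] [DecidableEq X] [DecidableEq Y] (n : ℕ) :
    X × (Fin (n + 1) → Y) → ℝ :=
  pushforward (Prod.map (fun xs : Fin (n + 1) → X => xs (Fin.last n)) id) (hmmJoint μ P W n)

/-- The law of `Y_{k+1}` given `X_k = x`. -/
noncomputable def stepKernel (x : X) (c : Y) : ℝ :=
  ∑ x', P x x' * W x' c

lemma sum_stepKernel [Fintype Y] (hP1 : ∀ x, ∑ x', P x x' = 1) (hW1 : ∀ x, ∑ y, W x y = 1)
    (x : X) : ∑ c, stepKernel P W x c = 1 := by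
  simp only [stepKernel]
  rw [sum_comm]
  simp [← mul_sum, hW1, hP1]

lemma stepKernel_nonneg (hP0 : ∀ x x', 0 ≤ P x x') (hW0 : ∀ x y, 0 ≤ W x y) (x : X)
    (c : Y) : 0 ≤ stepKernel P W x c :=
  sum_nonneg fun _ _ => mul_nonneg (hP0 _ _) (hW0 _ _)

variable [Fintype Y] [DecidableEq X] [DecidableEq Y]

lemma pushforward_snd_stateObsJoint (n : ℕ) :
    pushforward Prod.snd (stateObsJoint μ P W n) = obsJoint μ P W n := by
  funext ys
  rw [stateObsJoint, pushforward_pushforward, Prod.map_snd', Function.id_comp,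
    pushforward_snd_apply]
  rfl

lemma pushforward_fst_stateObsJoint (hinv : ∀ x', ∑ x, μ x * P x x' = μ x')
    (hW1 : ∀ x, ∑ y, W x y = 1) (n : ℕ) :
    pushforward Prod.fst (stateObsJoint μ P W n) = μ := by
  rw [stateObsJoint, pushforward_pushforward, Prod.map_fst', ← pushforward_pushforward]
  unfold hmmJoint
  rw [pushforward_fst_mul_kernel _ _ fun xs => sum_prod_channel W hW1 xs,
    pushforward_last_chainJoint μ P hinv]

lemma pushforward_last_stateObsJoint (hinv : ∀ x', ∑ x, μ x * P x x' = μ x')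
    (hW1 : ∀ x, ∑ y, W x y = 1) (n : ℕ) :
    pushforward (Prod.map id fun ys : Fin (n + 1) → Y => ys (Fin.last n)) (stateObsJoint μ P W n)
      = jointX1Y1 μ W := by
  funext ⟨x, b⟩
  rw [stateObsJoint, pushforward_pushforward, Prod.map_comp_map, Function.id_comp,
    Function.comp_id]
  unfold hmmJoint
  rw [pushforward_prodMap_mul_apply _ _ (chainJoint μ P n)
    fun (xs : Fin (n + 1) → X) (ys : Fin (n + 1) → Y) => ∏ i, W (xs i) (ys i)]
  simp only [pushforward_last_prod_channel W hW1]
  rw [sum_filter_mul_comp _ _ (W · b), pushforward_last_chainJoint μ P hinv]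
  rfl

theorem obsJoint_succ_snoc (n : ℕ) (ys : Fin (n + 1) → Y) (c : Y) :
    obsJoint μ P W (n + 1) (Fin.snoc ys c)
      = ∑ x, stateObsJoint μ P W n (x, ys) * stepKernel P W x c := by
  rw [obsJoint, sum_pi_fin_succ_snoc]
  simp only [chainJoint_snoc, prod_channel_snoc, Fin.snoc_castSucc, Fin.snoc_last]
  have hstep : ∀ xs : Fin (n + 1) → X, ∑ x', chainJoint μ P n xs * P (xs (Fin.last n)) x'
      * ((∏ i, W (xs i) (ys i)) * W x' c)
      = hmmJoint μ P W n (xs, ys) * stepKernel P W (xs (Fin.last n)) c := fun xs => by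
    simp only [hmmJoint, stepKernel, mul_sum]
    exact sum_congr rfl fun _ _ => by ring
  simp only [hstep, stateObsJoint, pushforward_prodMap_id_apply,
    sum_mul_comp_eq_sum_pushforward_mul (fun xs : Fin (n + 1) → X => xs (Fin.last n))
      (fun xs => hmmJoint μ P W n (xs, ys)) (stepKernel P W · c)]
  rfl

end HiddenMarkovJoint

section EntropyRateBounds

variable {X Y : Type} [Fintype X] (μ : X → ℝ) (P : X → X → ℝ) (W : X → Y → ℝ)

lemma jointX1Y2_eq : jointX1Y2 μ P W = fun z => μ z.1 * stepKernel P W z.1 z.2 := by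
  funext z
  simp only [jointX1Y2, stepKernel, mul_sum, mul_assoc]

variable [Fintype Y]

lemma HY2gX1_eq_condEnt [DecidableEq X] (hP1 : ∀ x, ∑ x', P x x' = 1)
    (hW1 : ∀ x, ∑ y, W x y = 1) :
    HY2gX1 μ P W = condEnt (jointX1Y2 μ P W) := by
  rw [HY2gX1, condEnt, jointX1Y2_eq, pushforward_fst_mul_kernel _ _ (sum_stepKernel P W hP1 hW1)]

lemma HY2gY1_eq_condEnt [DecidableEq Y] (hP1 : ∀ x, ∑ x', P x x' = 1)
    (hW1 : ∀ x, ∑ y, W x y = 1) :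
    HY2gY1 μ P W = condEnt (jointYY μ P W) := by
  have hmarg : pushforward Prod.fst (jointYY μ P W) = nuDist μ W := by
    funext b
    simp only [pushforward_fst_apply, jointYY, nuDist]
    rw [sum_comm]
    refine sum_congr rfl fun x _ => ?_
    rw [sum_comm]
    simp [← mul_sum, hW1, hP1]
  rw [HY2gY1, condEnt, hmarg]

variable [DecidableEq X] [DecidableEq Y]

/-- The law of `((X_{n+1}, (Y_1, …, Y_{n+1})), Y_{n+2})`. -/
noncomputable def nextObsJoint (n : ℕ) : (X × (Fin (n + 1) → Y)) × Y → ℝ :=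
  fun z => stateObsJoint μ P W n z.1 * stepKernel P W z.1.1 z.2

lemma nextObsJoint_nonneg (hμ0 : ∀ x, 0 ≤ μ x) (hP0 : ∀ x x', 0 ≤ P x x')
    (hW0 : ∀ x y, 0 ≤ W x y) (n : ℕ) (z : (X × (Fin (n + 1) → Y)) × Y) :
    0 ≤ nextObsJoint μ P W n z := by
  refine mul_nonneg (pushforward_nonneg (fun _ => ?_) _ _) (stepKernel_nonneg P W hP0 hW0 _ _)
  exact mul_nonneg (mul_nonneg (hμ0 _) (prod_nonneg fun _ _ => hP0 _ _))
    (prod_nonneg fun _ _ => hW0 _ _)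

lemma ent_obsJoint_succ_sub (hP1 : ∀ x, ∑ x', P x x' = 1) (hW1 : ∀ x, ∑ y, W x y = 1)
    (n : ℕ) : ent (obsJoint μ P W (n + 1)) - ent (obsJoint μ P W n)
      = condEnt (pushforward (Prod.map Prod.snd id) (nextObsJoint μ P W n)) := by
  have hr : pushforward (Prod.map Prod.snd id) (nextObsJoint μ P W n)
      = obsJoint μ P W (n + 1) ∘ (Equiv.prodComm _ _).trans (Fin.snocEquiv fun _ => Y) := by
    funext ⟨ys, c⟩
    rw [pushforward_prodMap_id_apply]
    exact (pushforward_snd_apply (fun a => nextObsJoint μ P W n (a, c)) ys).trans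
      (obsJoint_succ_snoc μ P W n ys c).symm
  have hr_fst : pushforward Prod.fst (pushforward (Prod.map Prod.snd id) (nextObsJoint μ P W n))
      = obsJoint μ P W n := by
    rw [pushforward_pushforward, Prod.map_fst', ← pushforward_pushforward,
      ← pushforward_snd_stateObsJoint μ P W n]
    exact congrArg (pushforward Prod.snd) (pushforward_fst_mul_kernel _
      (fun a : X × (Fin (n + 1) → Y) => stepKernel P W a.1) fun a => sum_stepKernel P W hP1 hW1 a.1)
  rw [condEnt, hr_fst, hr, ent_comp_equiv_s14]

lemma pushforward_last_nextObsJoint (hinv : ∀ x', ∑ x, μ x * P x x' = μ x')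
    (hW1 : ∀ x, ∑ y, W x y = 1) (n : ℕ) :
    pushforward (Prod.map (fun ys : Fin (n + 1) → Y => ys (Fin.last n)) id)
      (pushforward (Prod.map Prod.snd id) (nextObsJoint μ P W n)) = jointYY μ P W := by
  have hstate : pushforward (Prod.map (Prod.map id fun ys => ys (Fin.last n)) id)
      (nextObsJoint μ P W n) = fun w => jointX1Y1 μ W w.1 * stepKernel P W w.1.1 w.2 := by
    rw [← pushforward_last_stateObsJoint μ P W hinv hW1]
    exact pushforward_prodMap_mul_kernel _ _ fun w : X × Y => stepKernel P W w.1
  rw [pushforward_pushforward, Prod.map_comp_map, Function.comp_id,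
    show Prod.map ((fun ys : Fin (n + 1) → Y => ys (Fin.last n)) ∘ Prod.snd) (id : Y → Y)
      = Prod.map Prod.snd id ∘ Prod.map (Prod.map id fun ys => ys (Fin.last n)) id from rfl,
    ← pushforward_pushforward, hstate]
  funext ⟨b, c⟩
  rw [pushforward_prodMap_id_apply]
  refine (pushforward_snd_apply (fun a => jointX1Y1 μ W a * stepKernel P W a.1 c) b).trans ?_
  simp only [jointX1Y1, jointYY, stepKernel, mul_sum]
  exact sum_congr rfl fun _ _ => sum_congr rfl fun _ _ => by ring

lemma condEnt_nextObsJoint (hinv : ∀ x', ∑ x, μ x * P x x' = μ x')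
    (hP1 : ∀ x, ∑ x', P x x' = 1) (hW1 : ∀ x, ∑ y, W x y = 1) (n : ℕ) :
    condEnt (nextObsJoint μ P W n) = condEnt (jointX1Y2 μ P W) := by
  have hK := sum_stepKernel P W hP1 hW1
  unfold nextObsJoint
  rw [condEnt_mul_kernel_comp Prod.fst _ _ hK, pushforward_prodMap_mul_kernel,
    pushforward_fst_stateObsJoint μ P W hinv hW1, jointX1Y2_eq]

theorem ent_obsJoint_succ_sub_le_HY2gY1 (hμ0 : ∀ x, 0 ≤ μ x) (hP0 : ∀ x x', 0 ≤ P x x')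
    (hP1 : ∀ x, ∑ x', P x x' = 1) (hinv : ∀ x', ∑ x, μ x * P x x' = μ x')
    (hW0 : ∀ x y, 0 ≤ W x y) (hW1 : ∀ x, ∑ y, W x y = 1) (n : ℕ) :
    ent (obsJoint μ P W (n + 1)) - ent (obsJoint μ P W n) ≤ HY2gY1 μ P W := by
  rw [ent_obsJoint_succ_sub μ P W hP1 hW1, HY2gY1_eq_condEnt μ P W hP1 hW1,
    ← pushforward_last_nextObsJoint μ P W hinv hW1 n]
  exact condEnt_le_condEnt_pushforward _
    (pushforward_nonneg (nextObsJoint_nonneg μ P W hμ0 hP0 hW0 n) _)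

theorem HY2gX1_le_ent_obsJoint_succ_sub (hμ0 : ∀ x, 0 ≤ μ x) (hP0 : ∀ x x', 0 ≤ P x x')
    (hP1 : ∀ x, ∑ x', P x x' = 1) (hinv : ∀ x', ∑ x, μ x * P x x' = μ x')
    (hW0 : ∀ x y, 0 ≤ W x y) (hW1 : ∀ x, ∑ y, W x y = 1) (n : ℕ) :
    HY2gX1 μ P W ≤ ent (obsJoint μ P W (n + 1)) - ent (obsJoint μ P W n) := by
  rw [ent_obsJoint_succ_sub μ P W hP1 hW1, HY2gX1_eq_condEnt μ P W hP1 hW1,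
    ← condEnt_nextObsJoint μ P W hinv hP1 hW1 n]
  exact condEnt_le_condEnt_pushforward _ (nextObsJoint_nonneg μ P W hμ0 hP0 hW0 n)

end EntropyRateBounds

section Costs

variable {X Y : Type} [Fintype X] [Fintype Y] (μ : X → ℝ) (P : X → X → ℝ)
  (W : X → Y → ℝ)

lemma deltaBeta_sub_mul_CP (hbarY β : ℝ) :
    deltaBeta μ P W hbarY β - β * CP μ P W = (1 - 2 * β) * (HY2gY1 μ P W - hbarY) := by
  simp only [deltaBeta, CP, IY1Y2, HY2gY1]
  ring

lemma Cbeta_sub_deltaBeta (hbarY β : ℝ) :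
    Cbeta μ P W β - deltaBeta μ P W hbarY β = (1 - 2 * β) * (hbarY - HY2gX1 μ P W) := by
  simp only [Cbeta, CL, deltaBeta, CP, IY1Y2, HY2gY1]
  ring

end Costs

theorem delta_between_below_half_general
    {X Y : Type} [Fintype X] [Fintype Y]
    (μ : X → ℝ) (P : X → X → ℝ) (W : X → Y → ℝ)
    (hμ0 : ∀ x, 0 ≤ μ x)
    (hP0 : ∀ x x', 0 ≤ P x x') (hP1 : ∀ x, ∑ x', P x x' = 1)
    (hinv : ∀ x', ∑ x, μ x * P x x' = μ x')
    (hW0 : ∀ x y, 0 ≤ W x y) (hW1 : ∀ x, ∑ y, W x y = 1)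
    (hbarY : ℝ)
    (hlim : Filter.Tendsto (fun n => ent (obsJoint μ P W (n + 1)) - ent (obsJoint μ P W n))
      Filter.atTop (nhds hbarY)) :
    ∀ β : ℝ, 0 ≤ β → β ≤ 1 / 2 →
      β * CP μ P W ≤ deltaBeta μ P W hbarY β ∧
      deltaBeta μ P W hbarY β ≤ Cbeta μ P W β := by
  classical
  have h_upper : hbarY ≤ HY2gY1 μ P W := le_of_tendsto' hlim
    (ent_obsJoint_succ_sub_le_HY2gY1 μ P W hμ0 hP0 hP1 hinv hW0 hW1)
  have h_lower : HY2gX1 μ P W ≤ hbarY := ge_of_tendsto' hlim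
    (HY2gX1_le_ent_obsJoint_succ_sub μ P W hμ0 hP0 hP1 hinv hW0 hW1)
  intro β hβ0 hβ
  have hcoef : 0 ≤ 1 - 2 * β := by linarith
  constructor
  · nlinarith [deltaBeta_sub_mul_CP μ P W hbarY β, mul_nonneg hcoef (sub_nonneg.2 h_upper)]
  · nlinarith [Cbeta_sub_deltaBeta μ P W hbarY β, mul_nonneg hcoef (sub_nonneg.2 h_lower)]

/-- For every `β` with `0 ≤ β ≤ 1/2`:
`β·C_P(X,W) ≤ δ_β(X,W) ≤ C_β(X,W)`. -/
theorem delta_between_below_half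
    {X Y : Type} [Fintype X] [Fintype Y] [Nonempty X] [Nonempty Y] [DecidableEq X]
    (μ : X → ℝ) (P : X → X → ℝ) (W : X → Y → ℝ)
    (hμ0 : ∀ x, 0 ≤ μ x) (hμ1 : ∑ x, μ x = 1)
    (hP0 : ∀ x x', 0 ≤ P x x') (hP1 : ∀ x, ∑ x', P x x' = 1)
    (hinv : ∀ x', ∑ x, μ x * P x x' = μ x')
    (hirr : IrreducibleAperiodic (Matrix.of fun a b => P a b))
    (hW0 : ∀ x y, 0 ≤ W x y) (hW1 : ∀ x, ∑ y, W x y = 1)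
    (hbarY : ℝ)
    (hlim : Filter.Tendsto (fun n => ent (obsJoint μ P W (n + 1)) - ent (obsJoint μ P W n))
      Filter.atTop (nhds hbarY)) :
    ∀ β : ℝ, 0 ≤ β → β ≤ 1 / 2 →
      β * CP μ P W ≤ deltaBeta μ P W hbarY β ∧
      deltaBeta μ P W hbarY β ≤ Cbeta μ P W β :=
  delta_between_below_half_general μ P W hμ0 hP0 hP1 hinv hW0 hW1 hbarY hlim
end
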